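/- arXiv:2309.13597 — 6 statements merged into one kernel-verified Lean document; each statement's English description precedes it below -/
import Mathlib

section
/- Let I(α) = ∫₀^∞ ((ξ+1)^(α−1) − ξ^(α−1))² dξ. Then for all 0 ≤ r ≤ t ≤ T, ∫₀^T | k₂(ξ−t)·1_{ξ>t} − k₂(ξ−r)·1_{ξ>r} |² dξ ≤ (1/Γ(α)²) · (1/(2α−1) + I(α)) · (t−r)^(2α−1). -/
/-! Write `k(u) = u₊^(α-1)`. Translating by `t` and rescaling by `δ = t - r`, the homogeneity
`k(δu) = δ^(α-1) k(u)` gives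
`∫_ℝ (k(ξ-t) - k(ξ-r))² dξ = δ^(2α-1) ∫_ℝ (k(u+1) - k(u))² du`,
and the last integral splits into `∫_{-1}^0 (u+1)^(2α-2) du = 1/(2α-1)` and `I(α)`. The latter
is finite because `u^(α-1) - (u+1)^(α-1)` is at most `u^(α-1)` near `0` and, by the mean value
theorem, `(1-α) u^(α-2)` near `∞`. Restricting the first integral to `(0,T)` only makes it
smaller. -/

open MeasureTheory Set Real

/-- `Γ(α) k₂(u)`, extended by zero to `u ≤ 0`. -/
noncomputable def fracKernel (α u : ℝ) : ℝ := if 0 < u then u ^ (α - 1) else 0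

lemma fracKernel_mul {c : ℝ} (hc : 0 < c) (α u : ℝ) :
    fracKernel α (c * u) = c ^ (α - 1) * fracKernel α u := by
  simp only [fracKernel, mul_pos_iff_of_pos_left hc]
  split_ifs with hu
  · exact mul_rpow hc.le hu.le
  · rw [mul_zero]

lemma rpow_sq {x : ℝ} (hx : 0 ≤ x) (p : ℝ) : (x ^ p) ^ 2 = x ^ (2 * p) := by
  rw [← rpow_mul_natCast hx, mul_comm, Nat.cast_ofNat]

lemma rpow_sub_rpow_add_one_nonneg {α u : ℝ} (hα : α ≤ 1) (hu : 0 < u) :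
    0 ≤ u ^ (α - 1) - (u + 1) ^ (α - 1) :=
  sub_nonneg.2 (rpow_le_rpow_of_nonpos hu (by linarith) (by linarith))

lemma rpow_sub_rpow_add_one_le {α u : ℝ} (hα : α ≤ 1) (hu : 0 < u) :
    u ^ (α - 1) - (u + 1) ^ (α - 1) ≤ (1 - α) * u ^ (α - 2) := by
  obtain ⟨c, ⟨huc, -⟩, hc⟩ := exists_hasDerivAt_eq_slope (fun x => x ^ (α - 1))
    (fun x => (α - 1) * x ^ (α - 1 - 1)) (lt_add_one u)
    (fun x hx => (continuousAt_rpow_const _ _ (Or.inl (hu.trans_le hx.1).ne')).continuousWithinAt)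
    (fun x hx => hasDerivAt_rpow_const (Or.inl (hu.trans hx.1).ne'))
  have hcu : c ^ (α - 2) ≤ u ^ (α - 2) := rpow_le_rpow_of_nonpos hu huc.le (by linarith)
  rw [add_sub_cancel_left, div_one, show α - 1 - 1 = α - 2 by ring] at hc
  nlinarith

lemma integrableOn_sq_rpow_add_one_sub_rpow {α : ℝ} (h1 : 1 / 2 < α) (h2 : α ≤ 1) :
    IntegrableOn (fun u : ℝ => ((u + 1) ^ (α - 1) - u ^ (α - 1)) ^ 2) (Ioi 0) := by
  have hmeas : AEStronglyMeasurable fun u : ℝ => ((u + 1) ^ (α - 1) - u ^ (α - 1)) ^ 2 := by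
    fun_prop
  rw [← Ioc_union_Ioi_eq_Ioi zero_le_one]
  refine IntegrableOn.union ?_ ?_
  · have hdom : IntegrableOn (fun u : ℝ => u ^ (2 * (α - 1))) (Ioc 0 1) :=
      (intervalIntegrable_iff_integrableOn_Ioc_of_le zero_le_one).1
        (intervalIntegral.intervalIntegrable_rpow' (by linarith))
    refine hdom.mono' hmeas.restrict (ae_restrict_of_forall_mem measurableSet_Ioc fun u hu => ?_)
    have hdiff := rpow_sub_rpow_add_one_nonneg h2 hu.1
    rw [norm_pow, norm_eq_abs, sq_abs, ← rpow_sq hu.1.le]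
    have hu1 : 0 ≤ (u + 1) ^ (α - 1) := rpow_nonneg (by linarith [hu.1]) _
    exact sq_le_sq' (by linarith) (by linarith [rpow_nonneg hu.1.le (α - 1)])
  · have hdom : IntegrableOn (fun u : ℝ => (1 - α) ^ 2 * u ^ (2 * (α - 2))) (Ioi 1) :=
      (integrableOn_Ioi_rpow_of_lt (by linarith) one_pos).const_mul _
    refine hdom.mono' hmeas.restrict (ae_restrict_of_forall_mem measurableSet_Ioi fun u hu => ?_)
    have hu0 : (0 : ℝ) < u := one_pos.trans hu
    have hdiff := rpow_sub_rpow_add_one_nonneg h2 hu0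
    have hle := rpow_sub_rpow_add_one_le h2 hu0
    rw [norm_pow, norm_eq_abs, sq_abs, ← rpow_sq hu0.le, ← mul_pow]
    exact sq_le_sq' (by linarith) (by linarith)

lemma intervalIntegrable_rpow_add_one {α : ℝ} (h : 1 / 2 < α) :
    IntervalIntegrable (fun u : ℝ => (u + 1) ^ (2 * (α - 1))) volume (-1) 0 := by
  simpa using (intervalIntegral.intervalIntegrable_rpow' (a := 0) (b := 1)
      (r := 2 * (α - 1)) (by linarith)).comp_add_right 1 enorm_ne_top

lemma integral_rpow_add_one_Ioc {α : ℝ} (h : 1 / 2 < α) :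
    ∫ u in Ioc (-1) 0, (u + 1) ^ (2 * (α - 1)) = 1 / (2 * α - 1) := by
  rw [← intervalIntegral.integral_of_le (by norm_num),
    intervalIntegral.integral_comp_add_right (fun x => x ^ (2 * (α - 1))),
    integral_rpow (Or.inl (by linarith)), neg_add_cancel, zero_add, one_rpow,
    zero_rpow (by linarith), show 2 * (α - 1) + 1 = 2 * α - 1 by ring, sub_zero]

lemma sq_fracKernel_add_one_sub (α u : ℝ) :
    (fracKernel α (u + 1) - fracKernel α u) ^ 2 =
      (Ioc (-1) 0).indicator (fun u => (u + 1) ^ (2 * (α - 1))) u +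
        (Ioi 0).indicator (fun u => ((u + 1) ^ (α - 1) - u ^ (α - 1)) ^ 2) u := by
  rcases le_or_gt u (-1) with hu | hu
  · simp [fracKernel, indicator, not_lt.2 hu, show ¬0 < u + 1 by linarith,
      show ¬0 < u by linarith]
  rcases le_or_gt u 0 with hu' | hu'
  · simp [fracKernel, indicator, hu, hu', not_lt.2 hu', show 0 < u + 1 by linarith]
    exact rpow_sq (by linarith) _
  · simp [fracKernel, indicator, hu', not_le.2 hu', show 0 < u + 1 by linarith]

lemma integrable_sq_fracKernel_add_one_sub {α : ℝ} (h1 : 1 / 2 < α) (h2 : α ≤ 1) :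
    Integrable fun u => (fracKernel α (u + 1) - fracKernel α u) ^ 2 := by
  simp only [sq_fracKernel_add_one_sub]
  exact ((intervalIntegrable_rpow_add_one h1).1.integrable_indicator measurableSet_Ioc).add
    ((integrableOn_sq_rpow_add_one_sub_rpow h1 h2).integrable_indicator measurableSet_Ioi)

lemma integral_sq_fracKernel_add_one_sub {α : ℝ} (h1 : 1 / 2 < α) (h2 : α ≤ 1) :
    ∫ u, (fracKernel α (u + 1) - fracKernel α u) ^ 2 =
      1 / (2 * α - 1) + ∫ u in Ioi 0, ((u + 1) ^ (α - 1) - u ^ (α - 1)) ^ 2 := by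
  simp only [sq_fracKernel_add_one_sub]
  rw [integral_add
      ((intervalIntegrable_rpow_add_one h1).1.integrable_indicator measurableSet_Ioc)
      ((integrableOn_sq_rpow_add_one_sub_rpow h1 h2).integrable_indicator measurableSet_Ioi),
    integral_indicator measurableSet_Ioc, integral_indicator measurableSet_Ioi,
    integral_rpow_add_one_Ioc h1]

lemma sq_fracKernel_sub_sub {r t : ℝ} (hrt : r < t) (α ξ : ℝ) :
    (fracKernel α (ξ - t) - fracKernel α (ξ - r)) ^ 2 =
      (t - r) ^ (2 * (α - 1)) *
        (fracKernel α ((ξ - t) / (t - r) + 1) - fracKernel α ((ξ - t) / (t - r))) ^ 2 := by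
  have hδ : 0 < t - r := sub_pos.2 hrt
  have hξt : ξ - t = (t - r) * ((ξ - t) / (t - r)) := by field_simp
  have hξr : ξ - r = (t - r) * ((ξ - t) / (t - r) + 1) := by field_simp; ring
  rw [hξt, hξr, fracKernel_mul hδ, fracKernel_mul hδ, ← hξt, ← rpow_sq hδ.le]
  ring

lemma integrable_sq_fracKernel_sub_sub {α r t : ℝ} (hrt : r < t)
    (h : Integrable fun u => (fracKernel α (u + 1) - fracKernel α u) ^ 2) :
    Integrable fun ξ => (fracKernel α (ξ - t) - fracKernel α (ξ - r)) ^ 2 := by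
  simp only [sq_fracKernel_sub_sub hrt]
  exact ((h.comp_div (sub_pos.2 hrt).ne').comp_sub_right t).const_mul _

lemma integral_sq_fracKernel_sub_sub {α r t : ℝ} (hrt : r < t) :
    ∫ ξ, (fracKernel α (ξ - t) - fracKernel α (ξ - r)) ^ 2 =
      (t - r) ^ (2 * α - 1) * ∫ u, (fracKernel α (u + 1) - fracKernel α u) ^ 2 := by
  have hδ : 0 < t - r := sub_pos.2 hrt
  simp only [sq_fracKernel_sub_sub hrt]
  rw [integral_const_mul,
    integral_sub_right_eq_self (fun ξ => (fracKernel α (ξ / (t - r) + 1) -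
      fracKernel α (ξ / (t - r))) ^ 2) t,
    Measure.integral_comp_div (fun u => (fracKernel α (u + 1) - fracKernel α u) ^ 2),
    abs_of_pos hδ, smul_eq_mul, ← mul_assoc, ← rpow_add_one hδ.ne',
    show 2 * (α - 1) + 1 = 2 * α - 1 by ring]

theorem statement2_general (T α : ℝ) (hα1 : 1 / 2 < α) (hα2 : α < 1) :
    ∀ r t : ℝ, 0 ≤ r → r ≤ t → t ≤ T →
      (∫ ξ in Set.Ioo (0 : ℝ) T,
          ((if t < ξ then (ξ - t) ^ (α - 1) / Real.Gamma α else 0) -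
            (if r < ξ then (ξ - r) ^ (α - 1) / Real.Gamma α else 0)) ^ 2) ≤
        (1 / Real.Gamma α ^ 2) *
          (1 / (2 * α - 1) +
            ∫ ξ in Set.Ioi (0 : ℝ), ((ξ + 1) ^ (α - 1) - ξ ^ (α - 1)) ^ 2) *
          (t - r) ^ (2 * α - 1) := by
  intro r t _ hrt _
  have hintegrand : ∀ ξ, ((if t < ξ then (ξ - t) ^ (α - 1) / Gamma α else 0) -
      (if r < ξ then (ξ - r) ^ (α - 1) / Gamma α else 0)) ^ 2 =
      (fracKernel α (ξ - t) - fracKernel α (ξ - r)) ^ 2 / Gamma α ^ 2 := by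
    intro ξ
    simp only [fracKernel, sub_pos]
    split_ifs <;> ring
  simp only [hintegrand, integral_div]
  rcases hrt.eq_or_lt with rfl | hrt
  · simp [zero_rpow (show 2 * α - 1 ≠ 0 by linarith)]
  calc (∫ ξ in Ioo 0 T, (fracKernel α (ξ - t) - fracKernel α (ξ - r)) ^ 2) / Gamma α ^ 2
      ≤ (∫ ξ, (fracKernel α (ξ - t) - fracKernel α (ξ - r)) ^ 2) / Gamma α ^ 2 :=
        div_le_div_of_nonneg_right (setIntegral_le_integral (integrable_sq_fracKernel_sub_sub hrt
          (integrable_sq_fracKernel_add_one_sub hα1 hα2.le)) (ae_of_all _ fun _ => sq_nonneg _))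
          (sq_nonneg _)
    _ = _ := by
        rw [integral_sq_fracKernel_sub_sub hrt, integral_sq_fracKernel_add_one_sub hα1 hα2.le]
        ring

/-- With `I(α) = ∫₀^∞ ((ξ+1)^(α−1) − ξ^(α−1))² dξ` and
`k₂(u) = u^(α−1)/Γ(α)`, for all `0 ≤ r ≤ t ≤ T`,
`∫₀^T |k₂(ξ−t)1_{ξ>t} − k₂(ξ−r)1_{ξ>r}|² dξ ≤ (1/Γ(α)²)(1/(2α−1) + I(α))(t−r)^(2α−1)`. -/
theorem statement2 (T α : ℝ) (hT : 0 < T) (hα1 : 1 / 2 < α) (hα2 : α < 1) :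
    ∀ r t : ℝ, 0 ≤ r → r ≤ t → t ≤ T →
      (∫ ξ in Set.Ioo (0 : ℝ) T,
          ((if t < ξ then (ξ - t) ^ (α - 1) / Real.Gamma α else 0) -
            (if r < ξ then (ξ - r) ^ (α - 1) / Real.Gamma α else 0)) ^ 2) ≤
        (1 / Real.Gamma α ^ 2) *
          (1 / (2 * α - 1) +
            ∫ ξ in Set.Ioi (0 : ℝ), ((ξ + 1) ^ (α - 1) - ξ ^ (α - 1)) ^ 2) *
          (t - r) ^ (2 * α - 1) :=
  statement2_general T α hα1 hα2
end

section
/- Suppose B̄ satisfies Assumption (B1). Let (Ω, F, ℙ) be a probability space and q ≥ 2. Then for every 0 ≤ s ≤ t ≤ T and every ψ ∈ L^q(Ω; H) there exists a unique (up to ℙ-a.e. equality) w ∈ L^q(Ω; H) such that for ℙ-a.e. ω ∈ Ω, w(ω) solves the Volterra fixed-point equation E(s,t,ψ(ω)). -/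
open MeasureTheory

noncomputable section

/-- Lebesgue measure restricted to `(0,T)`. -/
abbrev fracMeas (T : ℝ) : Measure ℝ := volume.restrict (Set.Ioo 0 T)

/-- The Hilbert space `H = L²((0,T); ℝ^d)`. -/
abbrev HSp (d : ℕ) (T : ℝ) := Lp (EuclideanSpace ℝ (Fin d)) 2 (fracMeas T)

/-- The space `H_⊗ = L²((0,T)×(0,T); ℝ^d)`. -/
abbrev HTen (d : ℕ) (T : ℝ) :=
  Lp (EuclideanSpace ℝ (Fin d)) 2 ((fracMeas T).prod (fracMeas T))

/-- **Assumption (B1)**: growth, Lipschitz continuity, the Volterra property and causality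
of the extended drift `B̄ : H → H_⊗`. -/
structure AssumptionB1 (d : ℕ) (T : ℝ) (B : HSp d T → HTen d T) (C₀ : ℝ) : Prop where
  growth : ∀ w : HSp d T, ‖B w‖ ≤ C₀ * (1 + ‖w‖)
  lipschitz : ∀ w₁ w₂ : HSp d T, ‖B w₁ - B w₂‖ ≤ C₀ * ‖w₁ - w₂‖
  volterra : ∀ w : HSp d T,
    ∀ᵐ p ∂(fracMeas T).prod (fracMeas T),
      p.2 < p.1 → (B w : ℝ × ℝ → EuclideanSpace ℝ (Fin d)) p = 0
  causal : ∀ t : ℝ, 0 < t → t ≤ T → ∀ w₁ w₂ : HSp d T,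
    (∀ᵐ ξ ∂fracMeas T, ξ < t →
        (w₁ : ℝ → EuclideanSpace ℝ (Fin d)) ξ = (w₂ : ℝ → EuclideanSpace ℝ (Fin d)) ξ) →
      ∀ᵐ r ∂fracMeas T, r < t →
        ∀ᵐ ξ ∂fracMeas T,
          (B w₁ : ℝ × ℝ → EuclideanSpace ℝ (Fin d)) (r, ξ) =
            (B w₂ : ℝ × ℝ → EuclideanSpace ℝ (Fin d)) (r, ξ)

/-- `w` solves the Volterra fixed-point equation `E(s,t,ψ)`:
`w(ξ) = ψ(ξ) + ∫ₛᵗ B̄(w)(r,ξ) dr` for a.e. `ξ ∈ (0,T)`. -/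
def SolvesE (d : ℕ) (T : ℝ) (B : HSp d T → HTen d T) (s t : ℝ)
    (ψ w : HSp d T) : Prop :=
  ∀ᵐ ξ ∂fracMeas T,
    (w : ℝ → EuclideanSpace ℝ (Fin d)) ξ =
      (ψ : ℝ → EuclideanSpace ℝ (Fin d)) ξ +
        ∫ r in Set.Ioc s t, (B w : ℝ × ℝ → EuclideanSpace ℝ (Fin d)) (r, ξ)

/-!
On a fixed interval the equation reads `w = φ + F_{s,t} w` with
`F_{s,t} w (ξ) = ∫_{(s,t]} B̄(w)(r, ξ) dr`; Cauchy–Schwarz in `r` and Tonelli in `ξ` make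
`F_{s,t}` Lipschitz on `H` with constant `√(t - s) · C₀`. On short intervals Banach's fixed-point
theorem therefore gives a solution map `φ ↦ w`, Lipschitz in `φ`. By the Volterra property
`F_{u,t} w` vanishes on `(0, u)`, and by causality `F_{s,u} w` only depends on `w` on `(0, u)`;
so the solution map of `[s, t]` is the composite of those of `[s, u]` and `[u, t]`, and halving
intervals yields a Lipschitz solution map `S` on every `[s, t]`. Since `S` is Lipschitz and `ℙ` is
finite, `ω ↦ S (ψ ω)` lies in `L^q(Ω; H)`, and pointwise uniqueness makes it the only solution.
-/

open ENNReal NNReal Set Filter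

theorem ae_ae_swap_of_ae_prod {α β : Type*} [MeasurableSpace α] [MeasurableSpace β]
    {ν : Measure α} {μ : Measure β} [SFinite ν] [SFinite μ] {p : α × β → Prop}
    (h : ∀ᵐ z ∂ν.prod μ, p z) : ∀ᵐ y ∂μ, ∀ᵐ x ∂ν, p (x, y) := by
  rw [← Measure.prod_swap] at h
  exact Measure.ae_ae_of_ae_prod (ae_of_ae_map measurable_swap.aemeasurable h)

theorem ae_eq_of_ae_ae_eq {α β γ : Type*} [MeasurableSpace α] [MeasurableSpace β]
    [TopologicalSpace γ] [TopologicalSpace.MetrizableSpace γ] {ν : Measure α} {μ : Measure β}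
    [SFinite μ] {g g' : α × β → γ} (hg : AEStronglyMeasurable g (ν.prod μ))
    (hg' : AEStronglyMeasurable g' (ν.prod μ)) (h : ∀ᵐ x ∂ν, ∀ᵐ y ∂μ, g (x, y) = g' (x, y)) :
    g =ᵐ[ν.prod μ] g' := by
  have hmk : ∀ᵐ z ∂ν.prod μ, hg.mk g z = hg'.mk g' z := by
    refine (Measure.ae_prod_iff_ae_ae
      (hg.stronglyMeasurable_mk.measurableSet_eq_fun hg'.stronglyMeasurable_mk)).2 ?_
    filter_upwards [h, Measure.ae_ae_of_ae_prod hg.ae_eq_mk,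
      Measure.ae_ae_of_ae_prod hg'.ae_eq_mk] with x hx e e'
    filter_upwards [hx, e, e'] with y hy ey ey'
    rw [← ey, ← ey', hy]
  filter_upwards [hg.ae_eq_mk, hg'.ae_eq_mk, hmk] with z e e' hz
  rw [e, e', hz]

section SliceIntegral

variable {α β E : Type*} [MeasurableSpace α] [MeasurableSpace β] {ν : Measure α} {μ : Measure β}
  [SFinite ν] [SFinite μ] [NormedAddCommGroup E] {g : α × β → E}

theorem eLpNorm_eLpNorm_slice {p : ℝ≥0∞} (hp0 : p ≠ 0) (hp : p ≠ ∞)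
    (hg : AEStronglyMeasurable g (ν.prod μ)) :
    eLpNorm (fun y => eLpNorm (fun x => g (x, y)) p ν) p μ = eLpNorm g p (ν.prod μ) := by
  have hp' : p.toReal ≠ 0 := ENNReal.toReal_ne_zero.2 ⟨hp0, hp⟩
  simp only [eLpNorm_eq_lintegral_rpow_enorm_toReal hp0 hp, enorm_eq_self]
  rw [lintegral_prod_symm _ (hg.enorm.pow_const _)]
  congr 1
  refine lintegral_congr fun y => ?_
  rw [← ENNReal.rpow_mul, one_div_mul_cancel hp', ENNReal.rpow_one]

theorem ae_integrableOn_slice (hg : MemLp g 2 (ν.prod μ)) {A : Set α} (hA : ν A ≠ ∞) :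
    ∀ᵐ y ∂μ, IntegrableOn (fun x => g (x, y)) A ν := by
  have : IsFiniteMeasure (ν.restrict A) := isFiniteMeasure_restrict.2 hA
  filter_upwards [hg.1.prodMk_right, ((memLp_two_iff_integrable_sq_norm hg.1).1 hg).prod_left_ae]
    with y hmeas hsq
  exact (((memLp_two_iff_integrable_sq_norm hmeas).2 hsq).restrict A).integrable one_le_two

variable [NormedSpace ℝ E]

theorem MeasureTheory.AEStronglyMeasurable.setIntegral_slice
    (hg : AEStronglyMeasurable g (ν.prod μ)) (A : Set α) :
    AEStronglyMeasurable (fun y => ∫ x in A, g (x, y) ∂ν) μ :=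
  (hg.prod_swap.mono_ac (Measure.AbsolutelyContinuous.rfl.prod
    Measure.restrict_le_self.absolutelyContinuous)).integral_prod_right'

theorem eLpNorm_setIntegral_slice_le (hg : AEStronglyMeasurable g (ν.prod μ)) (A : Set α) :
    eLpNorm (fun y => ∫ x in A, g (x, y) ∂ν) 2 μ ≤ ν A ^ (1 / 2 : ℝ) * eLpNorm g 2 (ν.prod μ) := by
  have hslice : AEMeasurable (fun y => eLpNorm (fun x => g (x, y)) 2 ν) μ := by
    simp only [eLpNorm_eq_lintegral_rpow_enorm_toReal two_ne_zero ofNat_ne_top]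
    exact (hg.enorm.pow_const _).lintegral_prod_left'.pow_const _
  rw [← eLpNorm_eLpNorm_slice two_ne_zero ofNat_ne_top hg]
  refine eLpNorm_le_mul_eLpNorm_of_ae_le_mul'' 2 hslice.aestronglyMeasurable ?_
  filter_upwards [hg.prodMk_right] with y hy
  calc ‖∫ x in A, g (x, y) ∂ν‖ₑ ≤ eLpNorm (fun x => g (x, y)) 1 (ν.restrict A) := by
        rw [eLpNorm_one_eq_lintegral_enorm]; exact enorm_integral_le_lintegral_enorm _
    _ ≤ eLpNorm (fun x => g (x, y)) 2 (ν.restrict A) * ν A ^ (1 / 2 : ℝ) :=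
        (eLpNorm_le_eLpNorm_mul_rpow_measure_univ one_le_two hy.restrict).trans_eq (by norm_num)
    _ ≤ _ := by
        rw [enorm_eq_self, mul_comm]
        gcongr
        exact Measure.restrict_le_self

theorem MeasureTheory.MemLp.setIntegral_slice (hg : MemLp g 2 (ν.prod μ)) {A : Set α}
    (hA : ν A ≠ ∞) :
    MemLp (fun y => ∫ x in A, g (x, y) ∂ν) 2 μ :=
  ⟨hg.1.setIntegral_slice A, (eLpNorm_setIntegral_slice_le hg.1 A).trans_lt
    (mul_lt_top (rpow_lt_top_of_nonneg (by norm_num) hA) hg.2)⟩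

variable (ν) in
def sliceIntegralLp (A : Set α) (hA : ν A ≠ ∞) (g : Lp E 2 (ν.prod μ)) : Lp E 2 μ :=
  ((Lp.memLp g).setIntegral_slice hA).toLp _

variable {A : Set α} (hA : ν A ≠ ∞)

theorem coeFn_sliceIntegralLp (g : Lp E 2 (ν.prod μ)) :
    sliceIntegralLp ν A hA g =ᵐ[μ] fun y => ∫ x in A, g (x, y) ∂ν :=
  MemLp.coeFn_toLp _

theorem norm_sliceIntegralLp_le (g : Lp E 2 (ν.prod μ)) :
    ‖sliceIntegralLp ν A hA g‖ ≤ √(ν A).toReal * ‖g‖ := by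
  rw [Lp.norm_def, eLpNorm_congr_ae (coeFn_sliceIntegralLp hA g), Lp.norm_def,
    Real.sqrt_eq_rpow, ENNReal.toReal_rpow, ← ENNReal.toReal_mul]
  exact ENNReal.toReal_mono (mul_ne_top (rpow_ne_top_of_nonneg (by norm_num) hA)
    (Lp.eLpNorm_ne_top g)) (eLpNorm_setIntegral_slice_le (Lp.aestronglyMeasurable g) A)

theorem sliceIntegralLp_sub (g₁ g₂ : Lp E 2 (ν.prod μ)) :
    sliceIntegralLp ν A hA (g₁ - g₂) = sliceIntegralLp ν A hA g₁ - sliceIntegralLp ν A hA g₂ := by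
  apply Lp.ext
  filter_upwards [coeFn_sliceIntegralLp hA (g₁ - g₂), Lp.coeFn_sub (sliceIntegralLp ν A hA g₁)
      (sliceIntegralLp ν A hA g₂), coeFn_sliceIntegralLp hA g₁, coeFn_sliceIntegralLp hA g₂,
      ae_integrableOn_slice (Lp.memLp g₁) hA, ae_integrableOn_slice (Lp.memLp g₂) hA,
      ae_ae_swap_of_ae_prod (Lp.coeFn_sub g₁ g₂)] with y h h' h₁ h₂ hi₁ hi₂ hsub
  rw [h, h', Pi.sub_apply, h₁, h₂, ← integral_sub hi₁ hi₂]
  exact integral_congr_ae (ae_restrict_of_ae hsub)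

theorem sliceIntegralLp_union {A' : Set α} (hA' : ν A' ≠ ∞) (hAA' : ν (A ∪ A') ≠ ∞)
    (hd : Disjoint A A') (hm : MeasurableSet A') (g : Lp E 2 (ν.prod μ)) :
    sliceIntegralLp ν (A ∪ A') hAA' g = sliceIntegralLp ν A hA g + sliceIntegralLp ν A' hA' g := by
  apply Lp.ext
  filter_upwards [coeFn_sliceIntegralLp hAA' g, Lp.coeFn_add (sliceIntegralLp ν A hA g)
      (sliceIntegralLp ν A' hA' g), coeFn_sliceIntegralLp hA g, coeFn_sliceIntegralLp hA' g,
      ae_integrableOn_slice (Lp.memLp g) hAA'] with y h h' h₁ h₂ hi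
  rw [h, h', Pi.add_apply, h₁, h₂]
  exact setIntegral_union hd hm (hi.mono_set subset_union_left) (hi.mono_set subset_union_right)

end SliceIntegral

theorem LipschitzWith.memLp_comp {α E F : Type*} [MeasurableSpace α] {μ : Measure α}
    [IsFiniteMeasure μ] [NormedAddCommGroup E] [NormedAddCommGroup F] {g : E → F} {K : ℝ≥0}
    (hg : LipschitzWith K g) {f : α → E} {p : ℝ≥0∞} (hf : MemLp f p μ) : MemLp (g ∘ f) p μ := by
  have h0 : LipschitzWith K (fun x => g x - g 0) := by
    simpa using hg.sub (LipschitzWith.const (g 0))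
  convert (h0.comp_memLp (sub_self _) hf).add (memLp_const (g 0)) using 1
  ext; simp

theorem ContractingWith.exists_lipschitzWith_eq_add_iff {E : Type*} [NormedAddCommGroup E]
    [CompleteSpace E] {F : E → E} {K : ℝ≥0} (hF : ContractingWith K F) :
    ∃ S : E → E, LipschitzWith (1 - K)⁻¹ S ∧ ∀ φ w, w = φ + F w ↔ w = S φ := by
  have hc (φ : E) : ContractingWith K (fun w => φ + F w) :=
    ⟨hF.1, .of_dist_le_mul fun x y => by rw [dist_add_left]; exact hF.2.dist_le_mul x y⟩
  refine ⟨fun φ => fixedPoint _ (hc φ), .of_dist_le_mul fun φ φ' => ?_, fun φ w => ?_⟩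
  · have := (hc φ).fixedPoint_lipschitz_in_map (hc φ') fun z => (dist_add_right φ φ' (F z)).le
    rwa [div_eq_inv_mul, ← NNReal.coe_one, ← NNReal.coe_sub hF.1.le, ← NNReal.coe_inv] at this
  · exact ⟨fun h => (hc φ).fixedPoint_unique h.symm,
      fun h => h ▸ ((hc φ).fixedPoint_isFixedPt).symm⟩

namespace VolterraEquation

variable {d : ℕ} {T s t u C₀ : ℝ} {B : HSp d T → HTen d T}

-- Integrating against `fracMeas T` rather than `volume` makes `Ioc s t` of finite measure for all
-- `s t`; for `0 ≤ s` and `t ≤ T` the two agree (`fracMeas_restrict_Ioc`).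
def driftIntegral (B : HSp d T → HTen d T) (s t : ℝ) (w : HSp d T) : HSp d T :=
  sliceIntegralLp (fracMeas T) (Ioc s t) (measure_ne_top _ _) (B w)

theorem coeFn_driftIntegral (w : HSp d T) :
    driftIntegral B s t w =ᵐ[fracMeas T] fun ξ => ∫ r in Ioc s t, B w (r, ξ) ∂fracMeas T :=
  coeFn_sliceIntegralLp _ (B w)

theorem fracMeas_restrict_Ioc (hs : 0 ≤ s) (ht : t ≤ T) :
    (fracMeas T).restrict (Ioc s t) = volume.restrict (Ioc s t) := by
  rw [fracMeas, Measure.restrict_congr_set Ioo_ae_eq_Ioc,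
    Measure.restrict_restrict measurableSet_Ioc, inter_eq_left.2 (Ioc_subset_Ioc hs ht)]

theorem solvesE_iff (hs : 0 ≤ s) (ht : t ≤ T) {φ w : HSp d T} :
    SolvesE d T B s t φ w ↔ w = φ + driftIntegral B s t w := by
  have hcoe : ⇑(φ + driftIntegral B s t w) =ᵐ[fracMeas T]
      fun ξ => φ ξ + ∫ r in Ioc s t, B w (r, ξ) := by
    filter_upwards [Lp.coeFn_add φ (driftIntegral B s t w), coeFn_driftIntegral w] with ξ h h'
    rw [h, Pi.add_apply, h', fracMeas_restrict_Ioc hs ht]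
  rw [Lp.ext_iff]
  exact ⟨fun h => EventuallyEq.trans h hcoe.symm, fun h => EventuallyEq.trans h hcoe⟩

theorem lipschitzWith_driftIntegral (hB : AssumptionB1 d T B C₀) (hst : s ≤ t) :
    LipschitzWith (√(t - s) * C₀).toNNReal (driftIntegral B s t) := by
  refine .of_dist_le' fun w₁ w₂ => ?_
  have hmeas : (fracMeas T (Ioc s t)).toReal ≤ t - s :=
    calc (fracMeas T (Ioc s t)).toReal ≤ (volume (Ioc s t)).toReal :=
          ENNReal.toReal_mono (by simp) (Measure.le_iff'.1 Measure.restrict_le_self _)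
      _ = t - s := by simp [hst]
  rw [dist_eq_norm, dist_eq_norm, driftIntegral, driftIntegral, ← sliceIntegralLp_sub]
  calc _ ≤ √(fracMeas T (Ioc s t)).toReal * ‖B w₁ - B w₂‖ := norm_sliceIntegralLp_le _ _
    _ ≤ √(t - s) * (C₀ * ‖w₁ - w₂‖) := by gcongr; exact hB.lipschitz w₁ w₂
    _ = _ := by ring

theorem driftIntegral_add_driftIntegral (hsu : s ≤ u) (hut : u ≤ t) (w : HSp d T) :
    driftIntegral B s u w + driftIntegral B u t w = driftIntegral B s t w := by
  simp only [driftIntegral]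
  convert (sliceIntegralLp_union (measure_ne_top _ _) (measure_ne_top _ _) (measure_ne_top _ _)
    (Ioc_disjoint_Ioc_of_le le_rfl) measurableSet_Ioc (B w)).symm using 2
  exact (Ioc_union_Ioc_eq_Ioc hsu hut).symm

theorem driftIntegral_ae_eq_zero (hB : AssumptionB1 d T B C₀) (w : HSp d T) :
    ∀ᵐ ξ ∂fracMeas T, ξ < u → driftIntegral B u t w ξ = 0 := by
  filter_upwards [coeFn_driftIntegral w, ae_ae_swap_of_ae_prod (hB.volterra w)] with ξ h hv hξ
  rw [h]
  refine integral_eq_zero_of_ae ?_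
  filter_upwards [ae_restrict_of_ae hv, ae_restrict_mem measurableSet_Ioc] with r hr hmem
  exact hr (hξ.trans hmem.1)

theorem driftIntegral_congr (hB : AssumptionB1 d T B C₀) (huT : u ≤ T) {w₁ w₂ : HSp d T}
    (h : ∀ᵐ ξ ∂fracMeas T, ξ < u → w₁ ξ = w₂ ξ) :
    driftIntegral B s u w₁ = driftIntegral B s u w₂ := by
  set μ₀ := (fracMeas T).restrict (Iio u)
  have hcausal : ∀ᵐ r ∂μ₀, ∀ᵐ ξ ∂fracMeas T, B w₁ (r, ξ) = B w₂ (r, ξ) := by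
    rcases le_or_gt u 0 with hu | hu
    · have : fracMeas T (Iio u) = 0 := by
        rw [Measure.restrict_apply' measurableSet_Ioo, ← measure_empty (μ := (volume : Measure ℝ))]
        congr 1
        exact eq_empty_of_forall_notMem fun r hr => (hr.2.1.trans hr.1).not_ge hu
      simp [μ₀, Measure.restrict_eq_zero.2 this]
    · exact (ae_restrict_iff' measurableSet_Iio).2 (hB.causal u hu huT w₁ w₂ h)
  have hac : μ₀.prod (fracMeas T) ≪ (fracMeas T).prod (fracMeas T) :=
    Measure.restrict_le_self.absolutelyContinuous.prod .rfl
  have hprod : (B w₁ : ℝ × ℝ → EuclideanSpace ℝ (Fin d)) =ᵐ[μ₀.prod (fracMeas T)] B w₂ :=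
    ae_eq_of_ae_ae_eq ((Lp.aestronglyMeasurable _).mono_ac hac)
      ((Lp.aestronglyMeasurable _).mono_ac hac) hcausal
  apply Lp.ext
  filter_upwards [coeFn_driftIntegral w₁, coeFn_driftIntegral w₂, ae_ae_swap_of_ae_prod hprod]
    with ξ h₁ h₂ hξ
  rw [h₁, h₂]
  refine integral_congr_ae (ae_restrict_of_ae_restrict_of_subset Ioc_subset_Iic_self ?_)
  rwa [← Measure.restrict_congr_set Iio_ae_eq_Iic]

theorem driftIntegral_add_driftIntegral_right (hB : AssumptionB1 d T B C₀) (huT : u ≤ T)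
    (v w : HSp d T) : driftIntegral B s u (v + driftIntegral B u t w) = driftIntegral B s u v := by
  refine driftIntegral_congr hB huT ?_
  filter_upwards [Lp.coeFn_add v (driftIntegral B u t w), driftIntegral_ae_eq_zero hB w]
    with ξ h h₀ hξ
  rw [h, Pi.add_apply, h₀ hξ, add_zero]

variable (B) in
def HasLipschitzSolutionMap (s t : ℝ) : Prop :=
  ∃ S : HSp d T → HSp d T, ∃ L, LipschitzWith L S ∧
    ∀ φ w, w = φ + driftIntegral B s t w ↔ w = S φ

theorem hasLipschitzSolutionMap_of_sqrt_mul_lt_one (hB : AssumptionB1 d T B C₀) (hst : s ≤ t)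
    (h : √(t - s) * C₀ < 1) : HasLipschitzSolutionMap B s t :=
  let ⟨S, hS, hsol⟩ := ContractingWith.exists_lipschitzWith_eq_add_iff
    ⟨Real.toNNReal_lt_one.2 h, lipschitzWith_driftIntegral hB hst⟩
  ⟨S, _, hS, hsol⟩

theorem HasLipschitzSolutionMap.trans (h₁ : HasLipschitzSolutionMap B s u)
    (h₂ : HasLipschitzSolutionMap B u t) (hB : AssumptionB1 d T B C₀) (hsu : s ≤ u) (hut : u ≤ t)
    (huT : u ≤ T) : HasLipschitzSolutionMap B s t := by
  obtain ⟨S₁, L₁, hS₁, hsol₁⟩ := h₁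
  obtain ⟨S₂, L₂, hS₂, hsol₂⟩ := h₂
  refine ⟨S₂ ∘ S₁, L₂ * L₁, hS₂.comp hS₁, fun φ w => ⟨fun hw => ?_, fun hw => ?_⟩⟩
  · have hw₂ : w = (φ + driftIntegral B s u w) + driftIntegral B u t w := by
      rwa [add_assoc, driftIntegral_add_driftIntegral hsu hut]
    have hw₁ : φ + driftIntegral B s u w =
        φ + driftIntegral B s u (φ + driftIntegral B s u w) := by
      conv_lhs => rw [hw₂, driftIntegral_add_driftIntegral_right hB huT]
    rw [Function.comp_apply, ← (hsol₁ _ _).1 hw₁]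
    exact (hsol₂ _ _).1 hw₂
  · have hw₁ : S₁ φ = φ + driftIntegral B s u (S₁ φ) := (hsol₁ φ _).2 rfl
    have hw₂ : w = S₁ φ + driftIntegral B u t w := (hsol₂ _ w).2 hw
    have hF : driftIntegral B s u w = driftIntegral B s u (S₁ φ) := by
      conv_lhs => rw [hw₂, driftIntegral_add_driftIntegral_right hB huT]
    rw [← driftIntegral_add_driftIntegral hsu hut, hF, ← add_assoc, ← hw₁]
    exact hw₂

theorem hasLipschitzSolutionMap_of_mul_sq_lt_two_pow (hB : AssumptionB1 d T B C₀) (n : ℕ) :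
    ∀ {s t : ℝ}, s ≤ t → t ≤ T → (t - s) * C₀ ^ 2 < 2 ^ n → HasLipschitzSolutionMap B s t := by
  induction n with
  | zero =>
    intro s t hst _ h
    refine hasLipschitzSolutionMap_of_sqrt_mul_lt_one hB hst ?_
    calc √(t - s) * C₀ ≤ √(t - s) * |C₀| := by gcongr; exact le_abs_self C₀
      _ = √((t - s) * C₀ ^ 2) := by rw [Real.sqrt_mul (sub_nonneg.2 hst), Real.sqrt_sq_eq_abs]
      _ < 1 := (Real.sqrt_lt' one_pos).2 (by simpa using h)
  | succ n ih =>
    intro s t hst ht h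
    have hhalf : ((s + t) / 2 - s) * C₀ ^ 2 < 2 ^ n ∧ (t - (s + t) / 2) * C₀ ^ 2 < 2 ^ n := by
      rw [pow_succ (2 : ℝ) n] at h
      constructor <;> linarith
    exact (ih (by linarith) (by linarith) hhalf.1).trans (ih (by linarith) ht hhalf.2) hB
      (by linarith) (by linarith) (by linarith)

theorem hasLipschitzSolutionMap (hB : AssumptionB1 d T B C₀) (hst : s ≤ t) (ht : t ≤ T) :
    HasLipschitzSolutionMap B s t :=
  let ⟨n, hn⟩ := pow_unbounded_of_one_lt ((t - s) * C₀ ^ 2) one_lt_two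
  hasLipschitzSolutionMap_of_mul_sq_lt_two_pow hB n hst ht hn

end VolterraEquation

open VolterraEquation in
theorem statement5_general (d : ℕ) (T : ℝ)
    (B : HSp d T → HTen d T) (C₀ : ℝ)
    (hB : AssumptionB1 d T B C₀)
    (Ω : Type*) [MeasurableSpace Ω] (ℙ : Measure Ω) [IsProbabilityMeasure ℙ]
    (q : ℝ) :
    ∀ s t : ℝ, 0 ≤ s → s ≤ t → t ≤ T →
      ∀ ψ : Lp (HSp d T) (ENNReal.ofReal q) ℙ,
        ∃! w : Lp (HSp d T) (ENNReal.ofReal q) ℙ,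
          ∀ᵐ ω ∂ℙ,
            SolvesE d T B s t ((ψ : Ω → HSp d T) ω) ((w : Ω → HSp d T) ω) := by
  intro s t hs hst ht ψ
  obtain ⟨S, L, hS, hsol⟩ := hasLipschitzSolutionMap hB hst ht
  have hsolves (φ w : HSp d T) : SolvesE d T B s t φ w ↔ w = S φ :=
    (solvesE_iff hs ht).trans (hsol φ w)
  have hmem := hS.memLp_comp (Lp.memLp ψ)
  refine ⟨hmem.toLp _, ?_, fun W hW => Lp.ext ?_⟩
  · filter_upwards [hmem.coeFn_toLp] with ω hω
    exact (hsolves _ _).2 hω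
  · filter_upwards [hW, hmem.coeFn_toLp] with ω h h'
    rw [h']
    exact (hsolves _ _).1 h

/-- Under Assumption (B1), on a probability space `(Ω, F, ℙ)` and for `q ≥ 2`,
for every `0 ≤ s ≤ t ≤ T` and every `ψ ∈ L^q(Ω; H)` there exists a unique (up to `ℙ`-a.e.
equality) `w ∈ L^q(Ω; H)` such that for `ℙ`-a.e. `ω`, `w(ω)` solves `E(s,t,ψ(ω))`. -/
theorem statement5 (d : ℕ) (hd : 1 ≤ d) (T : ℝ) (hT : 0 < T)
    (B : HSp d T → HTen d T) (C₀ : ℝ) (hC₀ : 0 < C₀)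
    (hB : AssumptionB1 d T B C₀)
    (Ω : Type*) [MeasurableSpace Ω] (ℙ : Measure Ω) [IsProbabilityMeasure ℙ]
    (q : ℝ) (hq : 2 ≤ q) :
    ∀ s t : ℝ, 0 ≤ s → s ≤ t → t ≤ T →
      ∀ ψ : Lp (HSp d T) (ENNReal.ofReal q) ℙ,
        ∃! w : Lp (HSp d T) (ENNReal.ofReal q) ℙ,
          ∀ᵐ ω ∂ℙ,
            SolvesE d T B s t ((ψ : Ω → HSp d T) ω) ((w : Ω → HSp d T) ω) :=
  statement5_general d T B C₀ hB Ω ℙ q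
end
end

section
/- Suppose B̄ satisfies Assumption (B1), and for 0 ≤ s ≤ t ≤ T let S_{s,t}(ψ) denote the unique solution in H of the Volterra fixed-point equation E(s,t,ψ). Then for every 0 ≤ s ≤ u ≤ t ≤ T and every ψ ∈ H: (i) the cocycle identity S_{s,t}(ψ) = S_{u,t}(S_{s,u}(ψ)) holds in H; (ii) S_{s,t}(ψ)(ξ) = S_{s,u}(ψ)(ξ) for a.e. ξ ∈ (0,u). -/
open MeasureTheory

noncomputable section

/-!
Everything follows from uniqueness on initial segments: if `w` and `z` satisfy Volterra
equations with the same data up to time `u`, they agree on `(0,u)`. By the Volterra property,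
`w(ξ) - z(ξ) = ∫ₛ^ξ (B̄w - B̄z)(r,ξ) dr`. If `w = z` on `(0,σ)`, causality kills the part
`r < σ`, and Cauchy–Schwarz on `(σ,τ)` followed by the Lipschitz bound, applied to `w` patched
with `z` after `τ` (causality again), gives
`‖w - z‖²_{L²(0,τ)} ≤ (τ - σ) C₀² ‖w - z‖²_{L²(0,τ)}`. So agreement propagates in steps of
length `δ` with `δ C₀² < 1`.

Part (ii) is this uniqueness for `E(s,t,ψ)` and `E(s,u,ψ)`. By (ii) and causality, the
`(s,u]` part of the integral in `E(s,t,ψ)` may be computed with `S_{s,u}(ψ)`, so `S_{s,t}(ψ)`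
solves `E(u,t,S_{s,u}(ψ))`, and (i) is uniqueness once more.
-/

open Set
open scoped ENNReal

section General

variable {α : Type*} [MeasurableSpace α] {μ : Measure α}

lemma lintegral_enorm_sq_eq_eLpNorm_sq {E : Type*} [NormedAddCommGroup E] (f : α → E) :
    ∫⁻ x, ‖f x‖ₑ ^ 2 ∂μ = eLpNorm f 2 μ ^ 2 := by
  simpa using (eLpNorm_nnreal_pow_eq_lintegral (f := f) (μ := μ) (p := 2) two_ne_zero).symm

lemma sq_lintegral_le_measure_univ_mul {f : α → ℝ≥0∞} (hf : AEMeasurable f μ) :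
    (∫⁻ x, f x ∂μ) ^ 2 ≤ μ univ * ∫⁻ x, f x ^ 2 ∂μ := by
  have h := ENNReal.lintegral_mul_le_Lp_mul_Lq μ Real.HolderConjugate.two_two hf
    aemeasurable_const (g := fun _ => 1)
  simp only [Pi.mul_apply, mul_one, ENNReal.one_rpow, lintegral_const, one_mul] at h
  calc (∫⁻ x, f x ∂μ) ^ 2
      ≤ ((∫⁻ x, f x ^ (2 : ℝ) ∂μ) ^ (1 / 2 : ℝ) * μ univ ^ (1 / 2 : ℝ)) ^ 2 := by gcongr
    _ = μ univ * ∫⁻ x, f x ^ 2 ∂μ := by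
        rw [← ENNReal.rpow_natCast, ENNReal.mul_rpow_of_nonneg _ _ (by norm_num),
          ← ENNReal.rpow_mul, ← ENNReal.rpow_mul]
        norm_num [mul_comm]

lemma ENNReal.eq_zero_of_le_mul_of_lt_one {a c : ℝ≥0∞} (h : a ≤ c * a) (hc : c < 1)
    (ha : a ≠ ∞) : a = 0 := by
  by_contra h0
  exact (ENNReal.mul_lt_mul_left h0 ha hc).not_ge (by simpa using h)

lemma ae_ae_comm_imp_eq {β E : Type*} [MeasurableSpace β] [NormedAddCommGroup E] {ν : Measure β}
    [SFinite μ] [SFinite ν] {P : α → β → Prop} (hP : MeasurableSet {p : α × β | P p.1 p.2})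
    {f g : α × β → E} (hf : StronglyMeasurable f) (hg : StronglyMeasurable g)
    (h : ∀ᵐ x ∂μ, ∀ᵐ y ∂ν, P x y → f (x, y) = g (x, y)) :
    ∀ᵐ y ∂ν, ∀ᵐ x ∂μ, P x y → f (x, y) = g (x, y) := by
  refine (Measure.ae_ae_comm ?_).1 h
  simp only [imp_iff_not_or, ofPred_or]
  exact hP.compl.union (hf.measurableSet_eq_fun hg)

lemma setIntegral_Ioc_eq_of_ae_eq_zero_of_lt {E : Type*} [NormedAddCommGroup E]
    [NormedSpace ℝ E] {μ : Measure ℝ} {g : ℝ → E} {s ξ t : ℝ}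
    (hg : ∀ᵐ r ∂μ, ξ < r → g r = 0) (hξt : ξ ≤ t) :
    ∫ r in Ioc s t, g r ∂μ = ∫ r in Ioc s ξ, g r ∂μ :=
  setIntegral_eq_of_subset_of_ae_sdiff_eq_zero measurableSet_Ioc.nullMeasurableSet
    (Ioc_subset_Ioc_right hξt)
    (hg.mono fun _ hr hmem => hr (lt_of_not_ge fun h => hmem.2 ⟨hmem.1.1, h⟩))

lemma enorm_setIntegral_Ioc_sq_le {E : Type*} [NormedAddCommGroup E] [NormedSpace ℝ E]
    {μ : Measure ℝ} {g : ℝ → E} (hgm : AEStronglyMeasurable g μ) {s ξ σ τ : ℝ}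
    (hg : ∀ᵐ r ∂μ, r < σ → g r = 0) (hξ : ξ < τ) :
    ‖∫ r in Ioc s ξ, g r ∂μ‖ₑ ^ 2 ≤ μ (Ico σ τ) * ∫⁻ r in Ico σ τ, ‖g r‖ₑ ^ 2 ∂μ := by
  have hsupp : ∫ r in Ioc s ξ, g r ∂μ = ∫ r in Ioc s ξ ∩ Ici σ, g r ∂μ :=
    setIntegral_eq_of_subset_of_ae_sdiff_eq_zero measurableSet_Ioc.nullMeasurableSet
      inter_subset_left (hg.mono fun _ hr hmem => hr (not_le.1 fun h => hmem.2 ⟨hmem.1, h⟩))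
  have hsub : Ioc s ξ ∩ Ici σ ⊆ Ico σ τ := fun r hr => ⟨hr.2, hr.1.2.trans_lt hξ⟩
  calc ‖∫ r in Ioc s ξ, g r ∂μ‖ₑ ^ 2 ≤ (∫⁻ r in Ico σ τ, ‖g r‖ₑ ∂μ) ^ 2 := by
        rw [hsupp]
        gcongr
        exact (enorm_integral_le_lintegral_enorm _).trans (lintegral_mono_set hsub)
    _ ≤ μ (Ico σ τ) * ∫⁻ r in Ico σ τ, ‖g r‖ₑ ^ 2 ∂μ := by
        simpa only [Measure.restrict_apply_univ] using
          sq_lintegral_le_measure_univ_mul hgm.enorm.restrict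

lemma Lp.lintegral_enorm_sub_sq {E : Type*} [NormedAddCommGroup E] (f g : Lp E 2 μ) :
    ∫⁻ x, ‖f x - g x‖ₑ ^ 2 ∂μ = ‖f - g‖ₑ ^ 2 := by
  rw [Lp.enorm_def, eLpNorm_congr_ae (Lp.coeFn_sub f g), ← lintegral_enorm_sq_eq_eLpNorm_sq]
  rfl

end General

section Volterra

variable {d : ℕ} {T : ℝ} {B : HSp d T → HTen d T} {C₀ : ℝ}

local notation "ℝᵈ" => EuclideanSpace ℝ (Fin d)

lemma fracMeas_restrict_Ioc {a b : ℝ} (ha : 0 ≤ a) (hb : b ≤ T) :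
    (fracMeas T).restrict (Ioc a b) = volume.restrict (Ioc a b) := by
  rw [fracMeas, restrict_Ioo_eq_restrict_Ioc, Measure.restrict_restrict measurableSet_Ioc,
    inter_eq_self_of_subset_left (Ioc_subset_Ioc ha hb)]

lemma ae_fracMeas_lt_imp_of_nonpos {σ : ℝ} (hσ : σ ≤ 0) (P : ℝ → Prop) :
    ∀ᵐ ξ ∂fracMeas T, ξ < σ → P ξ :=
  (ae_restrict_mem measurableSet_Ioo).mono fun _ hξ hξσ => absurd (hξσ.trans_le hσ) hξ.1.not_gt

def AgreeBefore (σ : ℝ) (w z : HSp d T) : Prop :=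
  ∀ᵐ ξ ∂fracMeas T, ξ < σ → (w : ℝ → ℝᵈ) ξ = z ξ

lemma agreeBefore_of_lintegral_eq_zero {τ : ℝ} {w z : HSp d T}
    (h : ∫⁻ ξ in Iio τ, ‖(w : ℝ → ℝᵈ) ξ - z ξ‖ₑ ^ 2 ∂fracMeas T = 0) : AgreeBefore τ w z := by
  have hm : AEMeasurable (fun ξ => ‖(w : ℝ → ℝᵈ) ξ - z ξ‖ₑ ^ 2) ((fracMeas T).restrict (Iio τ)) :=
    (((Lp.aestronglyMeasurable w).sub (Lp.aestronglyMeasurable z)).enorm.pow_const 2).restrict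
  filter_upwards [(ae_restrict_iff' measurableSet_Iio).1 ((lintegral_eq_zero_iff' hm).1 h)]
    with ξ hξ hξτ
  simpa [sub_eq_zero] using hξ hξτ

lemma ae_integrable_slice (f : HTen d T) :
    ∀ᵐ ξ ∂fracMeas T, Integrable (fun r => (f : ℝ × ℝ → ℝᵈ) (r, ξ)) (fracMeas T) :=
  ((Lp.memLp f).integrable one_le_two).prod_left_ae

lemma ae_ae_slice_eq_zero_of_lt (f : HTen d T)
    (hf : ∀ᵐ p ∂(fracMeas T).prod (fracMeas T), p.2 < p.1 → (f : ℝ × ℝ → ℝᵈ) p = 0) :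
    ∀ᵐ ξ ∂fracMeas T, ∀ᵐ r ∂fracMeas T, ξ < r → (f : ℝ × ℝ → ℝᵈ) (r, ξ) = 0 :=
  ae_ae_comm_imp_eq (P := fun r ξ => ξ < r) (measurableSet_lt measurable_snd measurable_fst)
    (Lp.stronglyMeasurable f) stronglyMeasurable_const (Measure.ae_ae_of_ae_prod hf)

lemma AssumptionB1.ae_slice_eq_of_agreeBefore (hB : AssumptionB1 d T B C₀) {σ : ℝ} (hσ : σ ≤ T)
    {w z : HSp d T} (hwz : AgreeBefore σ w z) :
    ∀ᵐ r ∂fracMeas T, r < σ → ∀ᵐ ξ ∂fracMeas T, (B w : ℝ × ℝ → ℝᵈ) (r, ξ) = B z (r, ξ) := by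
  rcases le_or_gt σ 0 with hσ0 | hσ0
  · exact ae_fracMeas_lt_imp_of_nonpos hσ0 _
  · exact hB.causal σ hσ0 hσ w z hwz

lemma AssumptionB1.ae_ae_eq_of_agreeBefore (hB : AssumptionB1 d T B C₀) {σ : ℝ} (hσ : σ ≤ T)
    {w z : HSp d T} (hwz : AgreeBefore σ w z) :
    ∀ᵐ ξ ∂fracMeas T, ∀ᵐ r ∂fracMeas T, r < σ → (B w : ℝ × ℝ → ℝᵈ) (r, ξ) = B z (r, ξ) := by
  refine ae_ae_comm_imp_eq (P := fun r _ => r < σ)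
    (measurableSet_lt measurable_fst measurable_const)
    (Lp.stronglyMeasurable _) (Lp.stronglyMeasurable _) ?_
  filter_upwards [hB.ae_slice_eq_of_agreeBefore hσ hwz] with r hr
  exact Filter.eventually_imp_distrib_left.2 hr

lemma AssumptionB1.ae_setIntegral_eq_of_agreeBefore (hB : AssumptionB1 d T B C₀) {σ : ℝ}
    (hσ : σ ≤ T) {w z : HSp d T} (hwz : AgreeBefore σ w z) {a b : ℝ} (hb : b ≤ σ) :
    ∀ᵐ ξ ∂fracMeas T, ∫ r in Ioc a b, (B w : ℝ × ℝ → ℝᵈ) (r, ξ) ∂fracMeas T =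
      ∫ r in Ioc a b, (B z : ℝ × ℝ → ℝᵈ) (r, ξ) ∂fracMeas T := by
  filter_upwards [hB.ae_ae_eq_of_agreeBefore hσ hwz] with ξ hξ
  refine setIntegral_congr_ae measurableSet_Ioc ?_
  filter_upwards [hξ, Measure.ae_ne _ σ] with r hr hrσ hmem
  exact hr ((hmem.2.trans hb).lt_of_ne hrσ)

lemma AssumptionB1.ae_setIntegral_sub_setIntegral (hB : AssumptionB1 d T B C₀)
    (w z : HSp d T) (s : ℝ) :
    ∀ᵐ ξ ∂fracMeas T, ∀ t₁ t₂, ξ ≤ t₁ → ξ ≤ t₂ →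
      ∫ r in Ioc s t₁, (B w : ℝ × ℝ → ℝᵈ) (r, ξ) ∂fracMeas T -
          ∫ r in Ioc s t₂, (B z : ℝ × ℝ → ℝᵈ) (r, ξ) ∂fracMeas T =
        ∫ r in Ioc s ξ, ((B w : ℝ × ℝ → ℝᵈ) (r, ξ) - B z (r, ξ)) ∂fracMeas T := by
  filter_upwards [ae_ae_slice_eq_zero_of_lt _ (hB.volterra w),
    ae_ae_slice_eq_zero_of_lt _ (hB.volterra z), ae_integrable_slice (B w),
    ae_integrable_slice (B z)] with ξ hw hz hiw hiz t₁ t₂ h₁ h₂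
  rw [setIntegral_Ioc_eq_of_ae_eq_zero_of_lt hw h₁, setIntegral_Ioc_eq_of_ae_eq_zero_of_lt hz h₂,
    integral_sub hiw.integrableOn hiz.integrableOn]

lemma AssumptionB1.enorm_sub_le (hB : AssumptionB1 d T B C₀) (w z : HSp d T) :
    ‖B w - B z‖ₑ ≤ ENNReal.ofReal C₀ * ‖w - z‖ₑ := by
  rw [← ofReal_norm, ← ofReal_norm, ← ENNReal.ofReal_mul' (norm_nonneg _)]
  exact ENNReal.ofReal_le_ofReal (hB.lipschitz w z)

lemma exists_agreeBefore_lintegral_sub_eq (τ : ℝ) (w z : HSp d T) :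
    ∃ m : HSp d T, AgreeBefore τ w m ∧
      ∫⁻ ξ, ‖(m : ℝ → ℝᵈ) ξ - z ξ‖ₑ ^ 2 ∂fracMeas T =
        ∫⁻ ξ in Iio τ, ‖(w : ℝ → ℝᵈ) ξ - z ξ‖ₑ ^ 2 ∂fracMeas T := by
  have hmem := (Lp.memLp (w - z)).indicator (measurableSet_Iio (a := τ))
  have hm : ∀ᵐ ξ ∂fracMeas T, ((z + hmem.toLp _ : HSp d T) : ℝ → ℝᵈ) ξ - z ξ =
      (Iio τ).indicator (fun ξ => (w : ℝ → ℝᵈ) ξ - z ξ) ξ := by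
    filter_upwards [Lp.coeFn_add z (hmem.toLp _), hmem.coeFn_toLp, Lp.coeFn_sub w z]
      with ξ h₁ h₂ h₃
    simp only [h₁, Pi.add_apply, h₂, add_sub_cancel_left, indicator, h₃, Pi.sub_apply]
  refine ⟨z + hmem.toLp _, ?_, ?_⟩
  · filter_upwards [hm] with ξ hξ hξτ
    rw [indicator_of_mem (show ξ ∈ Iio τ from hξτ), sub_left_inj] at hξ
    exact hξ.symm
  · rw [← lintegral_indicator measurableSet_Iio]
    refine lintegral_congr_ae ?_
    filter_upwards [hm] with ξ hξ
    rw [hξ]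
    by_cases hξτ : ξ ∈ Iio τ <;> simp [hξτ]

lemma AssumptionB1.lintegral_sq_sub_le (hB : AssumptionB1 d T B C₀) (w z : HSp d T) :
    ∫⁻ p, ‖(B w : ℝ × ℝ → ℝᵈ) p - B z p‖ₑ ^ 2 ∂(fracMeas T).prod (fracMeas T) ≤
      ENNReal.ofReal C₀ ^ 2 * ∫⁻ ξ, ‖(w : ℝ → ℝᵈ) ξ - z ξ‖ₑ ^ 2 ∂fracMeas T := by
  rw [Lp.lintegral_enorm_sub_sq, Lp.lintegral_enorm_sub_sq, ← mul_pow]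
  gcongr
  exact hB.enorm_sub_le w z

lemma AssumptionB1.lintegral_Iio_lintegral_sq_sub_le (hB : AssumptionB1 d T B C₀) {τ : ℝ}
    (hτ : τ ≤ T) (w z : HSp d T) :
    ∫⁻ r in Iio τ, ∫⁻ ξ, ‖(B w : ℝ × ℝ → ℝᵈ) (r, ξ) - B z (r, ξ)‖ₑ ^ 2 ∂fracMeas T ∂fracMeas T ≤
      ENNReal.ofReal C₀ ^ 2 * ∫⁻ ξ in Iio τ, ‖(w : ℝ → ℝᵈ) ξ - z ξ‖ₑ ^ 2 ∂fracMeas T := by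
  obtain ⟨m, hwm, hm⟩ := exists_agreeBefore_lintegral_sub_eq τ w z
  have hmeas : AEMeasurable (fun p => ‖(B m : ℝ × ℝ → ℝᵈ) p - B z p‖ₑ ^ 2)
      ((fracMeas T).prod (fracMeas T)) :=
    ((Lp.aestronglyMeasurable _).sub (Lp.aestronglyMeasurable _)).enorm.pow_const 2
  calc _ = ∫⁻ r in Iio τ, ∫⁻ ξ, ‖(B m : ℝ × ℝ → ℝᵈ) (r, ξ) - B z (r, ξ)‖ₑ ^ 2 ∂fracMeas T
          ∂fracMeas T := by
        refine setLIntegral_congr_fun_ae measurableSet_Iio ?_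
        filter_upwards [hB.ae_slice_eq_of_agreeBefore hτ hwm] with r hr hrτ
        exact lintegral_congr_ae ((hr hrτ).mono fun ξ hξ => by simp only [hξ])
    _ ≤ ∫⁻ p, ‖(B m : ℝ × ℝ → ℝᵈ) p - B z p‖ₑ ^ 2 ∂(fracMeas T).prod (fracMeas T) := by
        rw [lintegral_prod _ hmeas]
        exact setLIntegral_le_lintegral _ _
    _ ≤ _ := hm ▸ hB.lintegral_sq_sub_le m z

lemma AssumptionB1.ae_enorm_sub_sq_le (hB : AssumptionB1 d T B C₀) {w z : HSp d T}
    {s σ τ : ℝ} (hστ : σ ≤ τ) (hτ : τ ≤ T)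
    (hwz : ∀ᵐ ξ ∂fracMeas T, ξ < τ → (w : ℝ → ℝᵈ) ξ - z ξ =
      ∫ r in Ioc s ξ, ((B w : ℝ × ℝ → ℝᵈ) (r, ξ) - B z (r, ξ)) ∂fracMeas T)
    (hσ : AgreeBefore σ w z) :
    ∀ᵐ ξ ∂(fracMeas T).restrict (Iio τ), ‖(w : ℝ → ℝᵈ) ξ - z ξ‖ₑ ^ 2 ≤
      ENNReal.ofReal (τ - σ) *
        ∫⁻ r in Ico σ τ, ‖(B w : ℝ × ℝ → ℝᵈ) (r, ξ) - B z (r, ξ)‖ₑ ^ 2 ∂fracMeas T := by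
  rw [ae_restrict_iff' measurableSet_Iio]
  filter_upwards [hwz, hB.ae_ae_eq_of_agreeBefore (hστ.trans hτ) hσ] with ξ hξ hc hξτ
  rw [hξ hξτ]
  refine (enorm_setIntegral_Ioc_sq_le (g := fun r => (B w : ℝ × ℝ → ℝᵈ) (r, ξ) - B z (r, ξ))
    (((Lp.stronglyMeasurable _).sub (Lp.stronglyMeasurable _)).comp_measurable
      measurable_prodMk_right).aestronglyMeasurable
    (hc.mono fun r h hr => sub_eq_zero.2 (h hr)) hξτ).trans ?_
  gcongr
  exact (Measure.restrict_le_self _).trans_eq Real.volume_Ico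

lemma AssumptionB1.agreeBefore_step (hB : AssumptionB1 d T B C₀) {w z : HSp d T}
    {s σ τ : ℝ} (hστ : σ ≤ τ) (hτ : τ ≤ T)
    (hsmall : ENNReal.ofReal (τ - σ) * ENNReal.ofReal C₀ ^ 2 < 1)
    (hwz : ∀ᵐ ξ ∂fracMeas T, ξ < τ → (w : ℝ → ℝᵈ) ξ - z ξ =
      ∫ r in Ioc s ξ, ((B w : ℝ × ℝ → ℝᵈ) (r, ξ) - B z (r, ξ)) ∂fracMeas T)
    (hσ : AgreeBefore σ w z) : AgreeBefore τ w z := by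
  set φ := ∫⁻ ξ in Iio τ, ‖(w : ℝ → ℝᵈ) ξ - z ξ‖ₑ ^ 2 ∂fracMeas T
  have hD : Measurable fun p : ℝ × ℝ => ‖(B w : ℝ × ℝ → ℝᵈ) (p.2, p.1) - B z (p.2, p.1)‖ₑ ^ 2 :=
    (((Lp.stronglyMeasurable _).sub (Lp.stronglyMeasurable _)).measurable.enorm.pow_const 2).comp
      measurable_swap
  have hφ : φ ≤ ENNReal.ofReal (τ - σ) * ENNReal.ofReal C₀ ^ 2 * φ := calc
    φ ≤ ∫⁻ ξ in Iio τ, ENNReal.ofReal (τ - σ) *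
          ∫⁻ r in Ico σ τ, ‖(B w : ℝ × ℝ → ℝᵈ) (r, ξ) - B z (r, ξ)‖ₑ ^ 2 ∂fracMeas T
          ∂fracMeas T := lintegral_mono_ae (hB.ae_enorm_sub_sq_le hστ hτ hwz hσ)
    _ = ENNReal.ofReal (τ - σ) * ∫⁻ r in Ico σ τ, ∫⁻ ξ in Iio τ,
          ‖(B w : ℝ × ℝ → ℝᵈ) (r, ξ) - B z (r, ξ)‖ₑ ^ 2 ∂fracMeas T ∂fracMeas T := by
      rw [lintegral_const_mul' _ _ ENNReal.ofReal_ne_top, lintegral_lintegral_swap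
        (f := fun ξ r => ‖(B w : ℝ × ℝ → ℝᵈ) (r, ξ) - B z (r, ξ)‖ₑ ^ 2) hD.aemeasurable]
    _ ≤ ENNReal.ofReal (τ - σ) * ∫⁻ r in Iio τ, ∫⁻ ξ,
          ‖(B w : ℝ × ℝ → ℝᵈ) (r, ξ) - B z (r, ξ)‖ₑ ^ 2 ∂fracMeas T ∂fracMeas T := by
      gcongr ENNReal.ofReal (τ - σ) * ?_
      exact (lintegral_mono_set Ico_subset_Iio_self).trans
        (lintegral_mono fun r => setLIntegral_le_lintegral _ _)
    _ ≤ ENNReal.ofReal (τ - σ) * (ENNReal.ofReal C₀ ^ 2 * φ) := by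
      gcongr
      exact hB.lintegral_Iio_lintegral_sq_sub_le hτ w z
    _ = _ := (mul_assoc _ _ _).symm
  have hφ_ne_top : φ ≠ ∞ := by
    refine ((setLIntegral_le_lintegral _ _).trans_lt ?_).ne
    rw [Lp.lintegral_enorm_sub_sq]
    exact ENNReal.pow_lt_top enorm_lt_top
  exact agreeBefore_of_lintegral_eq_zero (ENNReal.eq_zero_of_le_mul_of_lt_one hφ hsmall hφ_ne_top)

lemma AssumptionB1.agreeBefore_of_sub_eq_setIntegral (hB : AssumptionB1 d T B C₀)
    {w z : HSp d T} {s u : ℝ} (hu : u ≤ T)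
    (hwz : ∀ᵐ ξ ∂fracMeas T, ξ < u → (w : ℝ → ℝᵈ) ξ - z ξ =
      ∫ r in Ioc s ξ, ((B w : ℝ × ℝ → ℝᵈ) (r, ξ) - B z (r, ξ)) ∂fracMeas T) :
    AgreeBefore u w z := by
  obtain ⟨δ, hδ, hsmall⟩ := ENNReal.exists_nnreal_pos_mul_lt
    (ENNReal.pow_ne_top (n := 2) ENNReal.ofReal_ne_top) one_ne_zero
  have hind : ∀ n : ℕ, AgreeBefore (min (n * δ) u) w z := by
    intro n
    induction n with
    | zero => exact ae_fracMeas_lt_imp_of_nonpos (by simp) _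
    | succ n ih =>
      have hgap : min ((n + 1 : ℕ) * (δ : ℝ)) u ≤ min (n * (δ : ℝ)) u + δ := by
        rw [← min_add_add_right]
        exact min_le_min (by push_cast; linarith) (le_add_of_nonneg_right δ.2)
      refine hB.agreeBefore_step (min_le_min_right _ (by gcongr; simp))
        ((min_le_right _ _).trans hu) ((mul_le_mul_left ?_ _).trans_lt hsmall)
        (hwz.mono fun ξ h hξ => h (hξ.trans_le (min_le_right _ _))) ih
      rw [← ENNReal.ofReal_coe_nnreal]
      exact ENNReal.ofReal_le_ofReal (by linarith)
  obtain ⟨n, hn⟩ := exists_nat_ge (u / δ)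
  simpa [min_eq_right ((div_le_iff₀ (by exact_mod_cast hδ)).1 hn)] using hind n

end Volterra

section SolvesE

variable {d : ℕ} {T : ℝ} {B : HSp d T → HTen d T} {C₀ : ℝ} {s t : ℝ} {ψ w : HSp d T}

local notation "ℝᵈ" => EuclideanSpace ℝ (Fin d)

lemma solvesE_iff (hs : 0 ≤ s) (ht : t ≤ T) :
    SolvesE d T B s t ψ w ↔ ∀ᵐ ξ ∂fracMeas T, (w : ℝ → ℝᵈ) ξ =
      ψ ξ + ∫ r in Ioc s t, (B w : ℝ × ℝ → ℝᵈ) (r, ξ) ∂fracMeas T := by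
  simp only [SolvesE, fracMeas_restrict_Ioc hs ht]

lemma SolvesE.agreeBefore (hB : AssumptionB1 d T B C₀) {t' u : ℝ} {z : HSp d T}
    (hw : SolvesE d T B s t ψ w) (hz : SolvesE d T B s t' ψ z) (hs : 0 ≤ s) (ht : t ≤ T)
    (ht' : t' ≤ T) (hut : u ≤ t) (hut' : u ≤ t') : AgreeBefore u w z := by
  refine hB.agreeBefore_of_sub_eq_setIntegral (s := s) (hut.trans ht) ?_
  filter_upwards [(solvesE_iff hs ht).1 hw, (solvesE_iff hs ht').1 hz,
    hB.ae_setIntegral_sub_setIntegral w z s] with ξ hwξ hzξ hsub hξu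
  rw [hwξ, hzξ, add_sub_add_left_eq_sub, hsub t t' (hξu.le.trans hut) (hξu.le.trans hut')]

lemma SolvesE.restart (hB : AssumptionB1 d T B C₀) {u : ℝ} {v : HSp d T}
    (hw : SolvesE d T B s t ψ w) (hv : SolvesE d T B s u ψ v) (hwv : AgreeBefore u w v)
    (hs : 0 ≤ s) (hsu : s ≤ u) (hut : u ≤ t) (ht : t ≤ T) : SolvesE d T B u t v w := by
  rw [solvesE_iff (hs.trans hsu) ht]
  filter_upwards [(solvesE_iff hs ht).1 hw, (solvesE_iff hs (hut.trans ht)).1 hv,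
    hB.ae_setIntegral_eq_of_agreeBefore (hut.trans ht) hwv (a := s) le_rfl,
    ae_integrable_slice (B w)] with ξ hwξ hvξ hagree hint
  rw [hwξ, hvξ, ← Ioc_union_Ioc_eq_Ioc hsu hut, setIntegral_union (Ioc_disjoint_Ioc_of_le le_rfl)
    measurableSet_Ioc hint.integrableOn hint.integrableOn, hagree, add_assoc]

lemma SolvesE.unique (hB : AssumptionB1 d T B C₀) {z : HSp d T}
    (hw : SolvesE d T B s t ψ w) (hz : SolvesE d T B s t ψ z) (hs : 0 ≤ s) (ht : t ≤ T) :
    w = z := by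
  have hwz := hw.agreeBefore hB hz hs ht ht le_rfl le_rfl
  refine Lp.ext ?_
  filter_upwards [(solvesE_iff hs ht).1 hw, (solvesE_iff hs ht).1 hz,
    hB.ae_setIntegral_eq_of_agreeBefore ht hwz (a := s) le_rfl] with ξ hwξ hzξ hagree
  rw [hwξ, hzξ, hagree]

end SolvesE

theorem statement6_general (d : ℕ) (T : ℝ)
    (B : HSp d T → HTen d T) (C₀ : ℝ)
    (hB : AssumptionB1 d T B C₀)
    (S : ℝ → ℝ → HSp d T → HSp d T)
    (hS : ∀ s t : ℝ, 0 ≤ s → s ≤ t → t ≤ T →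
      ∀ ψ : HSp d T, SolvesE d T B s t ψ (S s t ψ)) :
    ∀ s u t : ℝ, 0 ≤ s → s ≤ u → u ≤ t → t ≤ T →
      ∀ ψ : HSp d T,
        S s t ψ = S u t (S s u ψ) ∧
        (∀ᵐ ξ ∂fracMeas T, ξ < u →
          (S s t ψ : ℝ → EuclideanSpace ℝ (Fin d)) ξ =
            (S s u ψ : ℝ → EuclideanSpace ℝ (Fin d)) ξ) := by
  intro s u t hs hsu hut ht ψ
  have hw := hS s t hs (hsu.trans hut) ht ψ
  have hv := hS s u hs hsu (hut.trans ht) ψ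
  have hwv : AgreeBefore u (S s t ψ) (S s u ψ) :=
    hw.agreeBefore hB hv hs ht (hut.trans ht) hut le_rfl
  refine ⟨?_, hwv⟩
  exact (hw.restart hB hv hwv hs hsu hut ht).unique hB (hS u t (hs.trans hsu) hut ht _)
    (hs.trans hsu) ht

/-- Under Assumption (B1), if `S_{s,t}(ψ)` denotes the (unique) solution of the
Volterra fixed-point equation `E(s,t,ψ)`, then for `0 ≤ s ≤ u ≤ t ≤ T` and `ψ ∈ H`:
(i) the cocycle identity `S_{s,t}(ψ) = S_{u,t}(S_{s,u}(ψ))` holds in `H`;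
(ii) `S_{s,t}(ψ)(ξ) = S_{s,u}(ψ)(ξ)` for a.e. `ξ ∈ (0,u)`. -/
theorem statement6 (d : ℕ) (hd : 1 ≤ d) (T : ℝ) (hT : 0 < T)
    (B : HSp d T → HTen d T) (C₀ : ℝ) (hC₀ : 0 < C₀)
    (hB : AssumptionB1 d T B C₀)
    (S : ℝ → ℝ → HSp d T → HSp d T)
    (hS : ∀ s t : ℝ, 0 ≤ s → s ≤ t → t ≤ T →
      ∀ ψ : HSp d T, SolvesE d T B s t ψ (S s t ψ)) :
    ∀ s u t : ℝ, 0 ≤ s → s ≤ u → u ≤ t → t ≤ T →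
      ∀ ψ : HSp d T,
        S s t ψ = S u t (S s u ψ) ∧
        (∀ᵐ ξ ∂fracMeas T, ξ < u →
          (S s t ψ : ℝ → EuclideanSpace ℝ (Fin d)) ξ =
            (S s u ψ : ℝ → EuclideanSpace ℝ (Fin d)) ξ) :=
  statement6_general d T B C₀ hB S hS
end
end

section
/- Let E and F be Banach spaces, Λ a dense linear subspace of E, and γ ∈ (0,1]. Let B : E → F be continuous and D : E → ℒ(E; F) satisfy ‖D(w₁) − D(w₂)‖_{ℒ(E;F)} ≤ C‖w₁ − w₂‖^γ for all w₁, w₂ ∈ E and some constant C ≥ 0. Assume that for all w, h ∈ Λ the Taylor identity B(w + h) − B(w) = ∫₀¹ D(w + θh)(h) dθ holds. Then B is Fréchet differentiable at every point of E with Fréchet derivative D, and moreover ‖B(w₂) − B(w₁) − D(w₁)(w₂ − w₁)‖ ≤ (C/(γ+1))·‖w₂ − w₁‖^{1+γ} for all w₁, w₂ ∈ E. -/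
open MeasureTheory intervalIntegral

/-! For `w, h` in the dense subspace, the Taylor identity writes the remainder
`B(w+h) − B(w) − D(w)h` as `∫₀¹ (D(w+θh) − D(w)) h dθ`, and the Hölder bound
`‖D(w+θh) − D(w)‖ ≤ C θ^γ ‖h‖^γ` integrates to `C/(γ+1) ‖h‖^(1+γ)`. Since `D` is Hölder, hence
continuous, and `B` is continuous, both sides of this estimate are continuous in `(w, h)`, so it
extends from the dense set `Λ × Λ` to all of `E × E`. An `o(‖h‖)` remainder is exactly Fréchet
differentiability. -/

open Asymptotics Filter Topology

section Holder

variable {E F : Type*} [SeminormedAddCommGroup E] [SeminormedAddCommGroup F]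

theorem continuous_of_norm_sub_le_mul_rpow {f : E → F} {C γ : ℝ} (hγ : 0 < γ)
    (hf : ∀ x y, ‖f x - f y‖ ≤ C * ‖x - y‖ ^ γ) : Continuous f := by
  refine continuous_iff_continuousAt.2 fun x => tendsto_iff_norm_sub_tendsto_zero.2 ?_
  have hbound : Continuous fun y : E => C * ‖y - x‖ ^ γ :=
    continuous_const.mul ((continuous_id.sub continuous_const).norm.rpow_const
      fun _ => Or.inr hγ.le)
  refine squeeze_zero (fun _ => norm_nonneg _) (fun y => hf y x) ?_
  simpa [Real.zero_rpow hγ.ne'] using hbound.tendsto x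

theorem isLittleO_norm_rpow_id {r : ℝ} (hr : 1 < r) :
    (fun x : E => ‖x‖ ^ r) =o[𝓝 0] fun x => x := by
  have hr' : 0 < r - 1 := sub_pos.2 hr
  have hlim : Tendsto (fun x : E => ‖x‖ ^ (r - 1)) (𝓝 0) (𝓝 0) := by
    simpa [Real.zero_rpow hr'.ne'] using
      (continuous_norm.rpow_const fun _ => Or.inr hr'.le).tendsto (0 : E)
  refine isLittleO_norm_right.1 ?_
  refine ((isLittleO_one_iff ℝ).2 hlim).mul_isBigO (isBigO_refl (fun x : E => ‖x‖) _)
    |>.congr (fun x => ?_) (fun x => one_mul _)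
  rw [← Real.rpow_add_one' (norm_nonneg x) (by linarith), sub_add_cancel]

end Holder

theorem hasFDerivAt_of_norm_sub_sub_le_mul_rpow {𝕜 E F : Type*} [NontriviallyNormedField 𝕜]
    [NormedAddCommGroup E] [NormedSpace 𝕜 E] [NormedAddCommGroup F] [NormedSpace 𝕜 F]
    {f : E → F} {L : E →L[𝕜] F} {x : E} {K r : ℝ}
    (hr : 1 < r) (hf : ∀ h, ‖f (x + h) - f x - L h‖ ≤ K * ‖h‖ ^ r) : HasFDerivAt f L x := by
  refine hasFDerivAt_iff_isLittleO_nhds_zero.2 <|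
    (IsBigO.of_bound K (Eventually.of_forall fun h => ?_)).trans_isLittleO
      (isLittleO_norm_rpow_id hr)
  rw [Real.norm_of_nonneg (by positivity)]
  exact hf h

section Remainder

variable {E F : Type*} [NormedAddCommGroup E] [NormedSpace ℝ E]
  [NormedAddCommGroup F] [NormedSpace ℝ F]

theorem sub_sub_apply_eq_integral [CompleteSpace F] {B : E → F} {D : E → E →L[ℝ] F}
    (hDc : Continuous D) {w h : E}
    (hTaylor : B (w + h) - B w = ∫ θ in (0 : ℝ)..1, D (w + θ • h) h) :
    B (w + h) - B w - D w h = ∫ θ in (0 : ℝ)..1, (D (w + θ • h) h - D w h) := by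
  have hint : IntervalIntegrable (fun θ : ℝ => D (w + θ • h) h) volume 0 1 :=
    ((hDc.comp (by fun_prop)).clm_apply continuous_const).intervalIntegrable 0 1
  rw [intervalIntegral.integral_sub hint intervalIntegrable_const, intervalIntegral.integral_const,
    hTaylor]
  simp

theorem norm_integral_apply_sub_apply_le {D : E → E →L[ℝ] F} {C γ : ℝ} (hγ : -1 < γ)
    (hD : ∀ w₁ w₂, ‖D w₁ - D w₂‖ ≤ C * ‖w₁ - w₂‖ ^ γ) (w h : E) :
    ‖∫ θ in (0 : ℝ)..1, (D (w + θ • h) h - D w h)‖ ≤ C / (γ + 1) * ‖h‖ ^ (1 + γ) := by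
  have hpointwise : ∀ θ ∈ Set.Ioc (0 : ℝ) 1,
      ‖D (w + θ • h) h - D w h‖ ≤ C * ‖h‖ ^ (1 + γ) * θ ^ γ := by
    intro θ hθ
    calc ‖D (w + θ • h) h - D w h‖ = ‖(D (w + θ • h) - D w) h‖ := rfl
      _ ≤ ‖D (w + θ • h) - D w‖ * ‖h‖ := ContinuousLinearMap.le_opNorm _ h
      _ ≤ C * ‖θ • h‖ ^ γ * ‖h‖ := by
        gcongr
        simpa using hD (w + θ • h) w
      _ = C * ‖h‖ ^ (1 + γ) * θ ^ γ := by
        rw [norm_smul, Real.norm_of_nonneg hθ.1.le, Real.mul_rpow hθ.1.le (norm_nonneg h),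
          Real.rpow_add' (norm_nonneg h) (by linarith), Real.rpow_one]
        ring
  calc ‖∫ θ in (0 : ℝ)..1, (D (w + θ • h) h - D w h)‖
      ≤ ∫ θ in (0 : ℝ)..1, C * ‖h‖ ^ (1 + γ) * θ ^ γ :=
        norm_integral_le_of_norm_le zero_le_one (ae_of_all _ hpointwise)
          ((intervalIntegrable_rpow' hγ).const_mul _)
    _ = C / (γ + 1) * ‖h‖ ^ (1 + γ) := by
        rw [intervalIntegral.integral_const_mul, integral_rpow (Or.inl hγ), Real.one_rpow,
          Real.zero_rpow (by linarith)]
        ring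

theorem norm_sub_sub_le_of_dense [CompleteSpace F] {s : Set E} (hs : Dense s) {B : E → F}
    (hB : Continuous B) {D : E → E →L[ℝ] F} {C γ : ℝ} (hγ : 0 < γ)
    (hD : ∀ w₁ w₂, ‖D w₁ - D w₂‖ ≤ C * ‖w₁ - w₂‖ ^ γ)
    (hTaylor : ∀ w h : E, w ∈ s → h ∈ s →
      B (w + h) - B w = ∫ θ in (0 : ℝ)..1, D (w + θ • h) h) (w h : E) :
    ‖B (w + h) - B w - D w h‖ ≤ C / (γ + 1) * ‖h‖ ^ (1 + γ) := by
  have hDc : Continuous D := continuous_of_norm_sub_le_mul_rpow hγ hD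
  have hclosed : IsClosed {p : E × E |
      ‖B (p.1 + p.2) - B p.1 - D p.1 p.2‖ ≤ C / (γ + 1) * ‖p.2‖ ^ (1 + γ)} :=
    isClosed_le (by fun_prop) <| continuous_const.mul <|
      continuous_snd.norm.rpow_const fun _ => Or.inr (by linarith)
  refine (hs.prod hs).induction (P := fun p : E × E =>
    ‖B (p.1 + p.2) - B p.1 - D p.1 p.2‖ ≤ C / (γ + 1) * ‖p.2‖ ^ (1 + γ)) ?_ hclosed (w, h)
  rintro ⟨w, h⟩ ⟨hw, hh⟩
  rw [sub_sub_apply_eq_integral hDc (hTaylor w h hw hh)]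
  exact norm_integral_apply_sub_apply_le (by linarith) hD w h

end Remainder

theorem statement9_general (E F : Type*)
    [NormedAddCommGroup E] [NormedSpace ℝ E]
    [NormedAddCommGroup F] [NormedSpace ℝ F] [CompleteSpace F]
    (Λ : Submodule ℝ E) (hΛ : Dense (Λ : Set E))
    (γ : ℝ) (hγ0 : 0 < γ)
    (B : E → F) (hB : Continuous B)
    (D : E → E →L[ℝ] F) (C : ℝ)
    (hD : ∀ w₁ w₂ : E, ‖D w₁ - D w₂‖ ≤ C * ‖w₁ - w₂‖ ^ γ)
    (hTaylor : ∀ w h : E, w ∈ Λ → h ∈ Λ →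
      B (w + h) - B w = ∫ θ in (0 : ℝ)..1, (D (w + θ • h)) h) :
    (∀ w : E, HasFDerivAt B (D w) w) ∧
      ∀ w₁ w₂ : E,
        ‖B w₂ - B w₁ - D w₁ (w₂ - w₁)‖ ≤ (C / (γ + 1)) * ‖w₂ - w₁‖ ^ (1 + γ) := by
  have hremainder := norm_sub_sub_le_of_dense hΛ hB hγ0 hD hTaylor
  refine ⟨fun w => hasFDerivAt_of_norm_sub_sub_le_mul_rpow (by linarith) (hremainder w),
    fun w₁ w₂ => ?_⟩
  simpa using hremainder w₁ (w₂ - w₁)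

/-- Extension of the Fréchet differential from a dense subspace: if
`B : E → F` is continuous, `D : E → ℒ(E;F)` is `γ`-Hölder continuous, and the Taylor identity
`B(w+h) − B(w) = ∫₀¹ D(w+θh)(h) dθ` holds for `w, h` in a dense linear subspace `Λ`, then `B` is
Fréchet differentiable on all of `E` with derivative `D`, with the quantitative Taylor remainder
bound `‖B(w₂) − B(w₁) − D(w₁)(w₂−w₁)‖ ≤ (C/(γ+1)) ‖w₂−w₁‖^(1+γ)`. -/
theorem statement9 (E F : Type*)
    [NormedAddCommGroup E] [NormedSpace ℝ E] [CompleteSpace E]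
    [NormedAddCommGroup F] [NormedSpace ℝ F] [CompleteSpace F]
    (Λ : Submodule ℝ E) (hΛ : Dense (Λ : Set E))
    (γ : ℝ) (hγ0 : 0 < γ) (hγ1 : γ ≤ 1)
    (B : E → F) (hB : Continuous B)
    (D : E → E →L[ℝ] F) (C : ℝ) (hC : 0 ≤ C)
    (hD : ∀ w₁ w₂ : E, ‖D w₁ - D w₂‖ ≤ C * ‖w₁ - w₂‖ ^ γ)
    (hTaylor : ∀ w h : E, w ∈ Λ → h ∈ Λ →
      B (w + h) - B w = ∫ θ in (0 : ℝ)..1, (D (w + θ • h)) h) :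
    (∀ w : E, HasFDerivAt B (D w) w) ∧
      ∀ w₁ w₂ : E,
        ‖B w₂ - B w₁ - D w₁ (w₂ - w₁)‖ ≤ (C / (γ + 1)) * ‖w₂ - w₁‖ ^ (1 + γ) :=
  statement9_general E F Λ hΛ γ hγ0 B hB D C hD hTaylor
end

section
/- Let a ≤ b be real numbers, α ∈ (0,1), and c : [a,b] → ℝ^d continuous. Define g : ℝ → ℝ^d by g(ξ) = ∫_a^{min(ξ,b)} (ξ−τ)^(α−1) c(τ) dτ for ξ > a and g(ξ) = 0 for ξ ≤ a. Then g is continuous on ℝ. -/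
/-!
The function is the convolution of the locally integrable kernel `s ↦ s^(α-1)` on `[0, ∞)` with
`c` restricted to `(a, b]`. The latter is bounded, compactly supported, and continuous away from
the two points `a, b`. For `ξ` near `ξ₀` the integrands `t ↦ K t • f (ξ - t)` are dominated by a
multiple of `|K|` on a fixed compact set and converge for every `t` with `ξ₀ - t ∉ {a, b}`, so
dominated convergence gives continuity.
-/

open MeasureTheory intervalIntegral

open Set Filter ContinuousLinearMap
open scoped Convolution

section

variable {E : Type*} [NormedAddCommGroup E] [NormedSpace ℝ E]

theorem MeasureTheory.LocallyIntegrable.continuous_convolution_lsmul {K : ℝ → ℝ}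
    (hK : LocallyIntegrable K) {f : ℝ → E} (hfm : AEStronglyMeasurable f) {M : ℝ}
    (hfM : ∀ x, ‖f x‖ ≤ M) (hf : HasCompactSupport f) {s : Set ℝ} (hs : s.Countable)
    (hfc : ∀ x ∉ s, ContinuousAt f x) :
    Continuous (K ⋆[lsmul ℝ ℝ] f) := by
  obtain ⟨R, hR⟩ := hf.isCompact.isBounded.subset_closedBall 0
  refine continuous_iff_continuousAt.2 fun ξ₀ => ?_
  show ContinuousAt (fun ξ => ∫ t, K t • f (ξ - t)) ξ₀
  have hbound : ∀ ξ ∈ Metric.ball ξ₀ 1, ∀ t,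
      ‖K t • f (ξ - t)‖ ≤ (Metric.closedBall ξ₀ (R + 1)).indicator (fun t => M * ‖K t‖) t := by
    intro ξ hξ t
    by_cases ht : ξ - t ∈ tsupport f
    · have htR : t ∈ Metric.closedBall ξ₀ (R + 1) := by
        have hξt : dist ξ t ≤ R := by simpa [dist_eq_norm] using hR ht
        have := dist_triangle_left t ξ₀ ξ
        exact Metric.mem_closedBall.2 (by linarith [Metric.mem_ball.1 hξ])
      rw [indicator_of_mem htR, norm_smul, mul_comm]
      exact mul_le_mul_of_nonneg_right (hfM _) (norm_nonneg _)
    · rw [image_eq_zero_of_notMem_tsupport ht, smul_zero, norm_zero]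
      exact indicator_nonneg (fun t _ => mul_nonneg ((norm_nonneg _).trans (hfM 0))
        (norm_nonneg _)) t
  refine continuousAt_of_dominated
    (Eventually.of_forall (hK.aestronglyMeasurable.convolution_integrand_snd (lsmul ℝ ℝ) hfm))
    (eventually_of_mem (Metric.ball_mem_nhds ξ₀ one_pos) fun ξ hξ =>
      Eventually.of_forall (hbound ξ hξ))
    (IntegrableOn.integrable_indicator
      ((hK.integrableOn_isCompact (isCompact_closedBall _ _)).norm.const_mul M)
      measurableSet_closedBall) ?_
  filter_upwards [(hs.preimage (sub_right_injective (b := ξ₀))).ae_notMem volume] with t ht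
  exact continuousAt_const.smul ((hfc _ ht).comp (f := fun ξ => ξ - t) (by fun_prop))

theorem continuous_convolution_lsmul_indicator_Ioc {K : ℝ → ℝ} (hK : LocallyIntegrable K)
    {a b : ℝ} (hab : a ≤ b) {c : ℝ → E} (hc : ContinuousOn c (Icc a b)) :
    Continuous (K ⋆[lsmul ℝ ℝ] (Ioc a b).indicator c) := by
  have hf_meas : AEStronglyMeasurable ((Ioc a b).indicator c) :=
    (aestronglyMeasurable_indicator_iff measurableSet_Ioc).2
      ((hc.mono Ioc_subset_Icc_self).aestronglyMeasurable measurableSet_Ioc)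
  obtain ⟨M, hM⟩ := isCompact_Icc.exists_bound_of_continuousOn hc
  have hf_bdd : ∀ x, ‖(Ioc a b).indicator c x‖ ≤ M := fun x => by
    by_cases hx : x ∈ Ioc a b
    · rw [indicator_of_mem hx]
      exact hM x (Ioc_subset_Icc_self hx)
    · rw [indicator_of_notMem hx, norm_zero]
      exact (norm_nonneg _).trans (hM a (left_mem_Icc.2 hab))
  have hf_supp : HasCompactSupport ((Ioc a b).indicator c) :=
    HasCompactSupport.intro isCompact_Icc fun x hx =>
      indicator_of_notMem (fun h => hx (Ioc_subset_Icc_self h)) c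
  have hfrontier : (frontier (Ioc a b)).Countable := by
    rcases hab.eq_or_lt with rfl | hlt
    · simp
    · simp [frontier_Ioc hlt]
  have hf_cont : ∀ x ∉ frontier (Ioc a b), ContinuousAt ((Ioc a b).indicator c) x :=
    fun x hx => (hc.mono (interior_Ioc.trans_subset Ioo_subset_Icc_self)).continuousAt_indicator hx
  exact hK.continuous_convolution_lsmul hf_meas hf_bdd hf_supp hfrontier hf_cont

noncomputable def riemannLiouvilleKernel (α : ℝ) : ℝ → ℝ :=
  (Ici 0).indicator fun s => s ^ (α - 1)

theorem locallyIntegrable_riemannLiouvilleKernel {α : ℝ} (hα : 0 < α) :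
    LocallyIntegrable (riemannLiouvilleKernel α) := by
  refine locallyIntegrable_iff.2 fun k hk => ?_
  have hIcc : IntegrableOn (fun s : ℝ => s ^ (α - 1)) (Icc (sInf k) (sSup k)) :=
    (Iff.mp intervalIntegrable_iff' (intervalIntegrable_rpow' (by linarith))).mono_set
      Icc_subset_uIcc
  exact (hIcc.indicator measurableSet_Ici).mono_set hk.isBounded.subset_Icc_sInf_sSup

theorem riemannLiouvilleKernel_convolution_indicator_Ioc (α a b ξ : ℝ) (c : ℝ → E) :
    (riemannLiouvilleKernel α ⋆[lsmul ℝ ℝ] (Ioc a b).indicator c) ξ =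
      ∫ τ in Ioc a (min b ξ), (ξ - τ) ^ (α - 1) • c τ := by
  have hintegrand : ∀ τ, riemannLiouvilleKernel α (ξ - τ) • (Ioc a b).indicator c τ =
      (Ioc a (min b ξ)).indicator (fun τ => (ξ - τ) ^ (α - 1) • c τ) τ := by
    intro τ
    simp only [riemannLiouvilleKernel, indicator_apply, mem_Ici, sub_nonneg, mem_Ioc, le_min_iff]
    split_ifs <;> simp_all
  simp_rw [convolution_lsmul_swap, hintegrand]
  exact integral_indicator measurableSet_Ioc

end

theorem statement12_general (d : ℕ) (a b : ℝ) (hab : a ≤ b)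
    (α : ℝ) (hα0 : 0 < α)
    (c : ℝ → EuclideanSpace ℝ (Fin d)) (hc : ContinuousOn c (Set.Icc a b)) :
    Continuous (fun ξ : ℝ =>
      if a < ξ then ∫ τ in a..(min ξ b), ((ξ - τ) ^ (α - 1)) • c τ else 0) := by
  have hconv : (fun ξ : ℝ =>
      if a < ξ then ∫ τ in a..(min ξ b), ((ξ - τ) ^ (α - 1)) • c τ else 0) =
      riemannLiouvilleKernel α ⋆[lsmul ℝ ℝ] (Ioc a b).indicator c := by
    funext ξ
    rw [riemannLiouvilleKernel_convolution_indicator_Ioc, min_comm]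
    split_ifs with hξ
    · exact integral_of_le (le_min hab hξ.le)
    · rw [Ioc_eq_empty (min_le_of_right_le (not_lt.1 hξ)).not_gt, Measure.restrict_empty,
        integral_zero_measure]
  rw [hconv]
  exact continuous_convolution_lsmul_indicator_Ioc (locallyIntegrable_riemannLiouvilleKernel hα0)
    hab hc

/-- Continuity of a truncated Riemann–Liouville fractional integral: if
`c : [a,b] → ℝ^d` is continuous and `α ∈ (0,1)`, then `g(ξ) = ∫_a^{min(ξ,b)} (ξ−τ)^(α−1) c(τ) dτ`
for `ξ > a`, `g(ξ) = 0` for `ξ ≤ a`, defines a continuous function on `ℝ`. -/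
theorem statement12 (d : ℕ) (hd : 1 ≤ d) (a b : ℝ) (hab : a ≤ b)
    (α : ℝ) (hα0 : 0 < α) (hα1 : α < 1)
    (c : ℝ → EuclideanSpace ℝ (Fin d)) (hc : ContinuousOn c (Set.Icc a b)) :
    Continuous (fun ξ : ℝ =>
      if a < ξ then ∫ τ in a..(min ξ b), ((ξ - τ) ^ (α - 1)) • c τ else 0) :=
  statement12_general d a b hab α hα0 c hc
end

section
/- Let 0 ≤ s < t ≤ T and v ∈ L²((0,T); ℝ^d). Define f : (0,T) → ℝ^d by f(ξ) = (1/Γ(α)²) ∫_{T−t}^{T−s} 1_{τ<ξ} (ξ−τ)^(α−1) · ( ∫_τ^T (η−τ)^(α−1) v(η) dη ) dτ. Then f(ξ) is well defined (the integrals are finite) for every ξ ∈ (0,T), f is continuous on (0,T), and f(ξ) = 0 for every ξ ∈ (0, T−t]. -/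
open MeasureTheory

noncomputable section

/-!
The inner integral `τ ↦ ∫_τ^T (η - τ)^(α-1) v(η) dη` and the outer integral are both convolutions
with the Riemann–Liouville kernel `z^(α-1) 1_{z>0}`, which is locally `L²` since `2(α-1) > -1`;
cut off at a finite length it is in `L²(ℝ)`, and over the bounded ranges of integration the cut-off
changes nothing. The convolution of two `L²` functions is continuous: approximate the kernel in
`L²` by a compactly supported continuous function, whose convolution is continuous, and note that
by Cauchy–Schwarz the error is uniformly small. Hence the inner integral is continuous for
`τ ≥ 0`, so bounded and `L²` on `(T - t, T - s]`, and a second application gives the continuity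
of `f`. For `ξ ≤ T - t` the factor `1_{τ<ξ}` vanishes on the whole range of integration.
-/

open Set
open scoped ENNReal

section Lp

variable {α E : Type*} [MeasurableSpace α] {μ : Measure α} [NormedAddCommGroup E]

theorem ContinuousOn.memLp_restrict_of_isCompact [TopologicalSpace α] [OpensMeasurableSpace α]
    [IsFiniteMeasureOnCompacts μ] {s : Set α} (hs : IsCompact s) (h's : MeasurableSet s)
    {f : α → E} (hf : ContinuousOn f s) (p : ℝ≥0∞) : MemLp f p (μ.restrict s) := by
  obtain ⟨C, hC⟩ := hs.exists_bound_of_continuousOn hf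
  have : IsFiniteMeasure (μ.restrict s) := isFiniteMeasure_restrict.2 hs.measure_lt_top.ne
  exact MemLp.of_bound (hf.aestronglyMeasurable_of_isCompact hs h's) C
    ((ae_restrict_iff' h's).2 (ae_of_all _ hC))

variable [NormedSpace ℝ E]

theorem integrable_smul_of_memLp_two {k : α → ℝ} {u : α → E} (hk : MemLp k 2 μ)
    (hu : MemLp u 2 μ) : Integrable (fun y => k y • u y) μ :=
  memLp_one_iff_integrable.mp (hu.smul hk)

theorem norm_integral_smul_le_of_memLp_two {k : α → ℝ} {u : α → E} (hk : MemLp k 2 μ)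
    (hu : MemLp u 2 μ) : ‖∫ y, k y • u y ∂μ‖ ≤ (eLpNorm k 2 μ * eLpNorm u 2 μ).toReal := by
  rw [← toReal_enorm]
  refine ENNReal.toReal_mono (ENNReal.mul_ne_top hk.eLpNorm_ne_top hu.eLpNorm_ne_top) ?_
  calc ‖∫ y, k y • u y ∂μ‖ₑ ≤ eLpNorm (k • u) 1 μ :=
        (enorm_integral_le_lintegral_enorm _).trans_eq eLpNorm_one_eq_lintegral_enorm.symm
    _ ≤ eLpNorm k 2 μ * eLpNorm u 2 μ := eLpNorm_smul_le_mul_eLpNorm hu.1 hk.1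

end Lp

section Convolution

variable {G E : Type*} [AddCommGroup G] [TopologicalSpace G] [IsTopologicalAddGroup G]
  [NormalSpace G] [WeaklyLocallyCompactSpace G] [MeasurableSpace G] [BorelSpace G]
  {μ : Measure G} [μ.IsAddLeftInvariant] [μ.IsNegInvariant] [μ.Regular]
  [NormedAddCommGroup E] [NormedSpace ℝ E]

theorem continuous_integral_comp_sub_smul_of_memLp_two {k : G → ℝ} {u : G → E}
    (hk : MemLp k 2 μ) (hu : MemLp u 2 μ) : Continuous fun x => ∫ y, k (x - y) • u y ∂μ := by
  have translate : ∀ {h : G → ℝ}, MemLp h 2 μ → ∀ x, MemLp (fun y => h (x - y)) 2 μ :=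
    fun hh x => hh.comp_measurePreserving (Measure.measurePreserving_sub_left μ x)
  refine continuous_of_uniform_approx_of_continuous fun U hU => ?_
  obtain ⟨ε, hε, hεU⟩ := Metric.mem_uniformity_dist.1 hU
  obtain ⟨δ, hδ, hδu⟩ :=
    ENNReal.exists_pos_mul_lt hu.eLpNorm_ne_top (ENNReal.ofReal_pos.2 hε).ne'
  obtain ⟨g, g_supp, hkg, g_cont, hg⟩ :=
    hk.exists_hasCompactSupport_eLpNorm_sub_le ENNReal.ofNat_ne_top hδ.ne'
  refine ⟨fun x => ∫ y, g (x - y) • u y ∂μ, ?_, fun x => hεU ?_⟩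
  · exact (g_supp.continuous_convolution_left (ContinuousLinearMap.lsmul ℝ ℝ) g_cont
      (hu.locallyIntegrable one_le_two) (μ := μ)).congr fun x => convolution_lsmul_swap
  · rw [dist_eq_norm, ← integral_sub (integrable_smul_of_memLp_two (translate hk x) hu)
      (integrable_smul_of_memLp_two (translate hg x) hu)]
    simp_rw [← sub_smul]
    refine (norm_integral_smul_le_of_memLp_two (translate (hk.sub hg) x) hu).trans_lt ?_
    have hshift : eLpNorm (fun y => (k - g) (x - y)) 2 μ = eLpNorm (k - g) 2 μ :=
      eLpNorm_comp_measurePreserving (hk.sub hg).1 (Measure.measurePreserving_sub_left μ x)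
    rw [hshift]
    exact ENNReal.toReal_lt_of_lt_ofReal ((mul_le_mul_left hkg _).trans_lt hδu)

theorem continuous_integral_comp_sub_right_smul_of_memLp_two {k : G → ℝ} {u : G → E}
    (hk : MemLp k 2 μ) (hu : MemLp u 2 μ) : Continuous fun x => ∫ y, k (y - x) • u y ∂μ := by
  refine (continuous_integral_comp_sub_smul_of_memLp_two
    (hk.comp_measurePreserving (Measure.measurePreserving_neg μ)) hu).congr fun x => ?_
  simp only [Function.comp_apply, neg_sub]

end Convolution

section RiemannLiouville

variable {E : Type*} [NormedAddCommGroup E] [NormedSpace ℝ E]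

/-- The Riemann–Liouville kernel `z ^ β · 1_{z > 0}`, cut off at `L` so that it is in `L²`. -/
def truncRLKernel (L β : ℝ) : ℝ → ℝ := (Ioc 0 L).indicator fun z => z ^ β

theorem memLp_truncRLKernel (L : ℝ) {β : ℝ} (hβ : -1 / 2 < β) :
    MemLp (truncRLKernel L β) 2 volume := by
  have hmeas : Measurable fun z : ℝ => z ^ β := by fun_prop
  rw [truncRLKernel, memLp_indicator_iff_restrict measurableSet_Ioc,
    memLp_two_iff_integrable_sq hmeas.aestronglyMeasurable]
  refine ((intervalIntegral.intervalIntegrable_rpow' (a := 0) (b := L)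
    (by linarith : -1 < 2 * β)).1).congr_fun (fun z hz => ?_) measurableSet_Ioc
  dsimp only
  rw [mul_comm, Real.rpow_mul hz.1.le, Real.rpow_two]

theorem truncRLKernel_comp_sub_right_smul_indicator {c L β τ : ℝ} (hτ : c ≤ τ) (v : ℝ → E) :
    (fun η => truncRLKernel (L - c) β (η - τ) • (Ioc c L).indicator v η) =
      (Ioc τ L).indicator fun η => (η - τ) ^ β • v η := by
  ext η
  by_cases hη : η ∈ Ioc τ L
  · have : η - τ ∈ Ioc 0 (L - c) := ⟨by linarith [hη.1], by linarith [hη.2]⟩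
    simp [truncRLKernel, hη, this, show η ∈ Ioc c L from ⟨by linarith [hη.1], hη.2⟩]
  · have : η - τ ∉ Ioc 0 (L - c) ∨ η ∉ Ioc c L := by
      by_contra! h
      exact hη ⟨by linarith [h.1.1], h.2.2⟩
    rcases this with h | h <;> simp [truncRLKernel, hη, h]

theorem truncRLKernel_comp_sub_left_smul_indicator {L β a b ξ : ℝ} (hξ : ξ - a ≤ L)
    (u : ℝ → E) :
    (fun τ => truncRLKernel L β (ξ - τ) • (Ioc a b).indicator u τ) =
      (Ioc a b).indicator fun τ => (if τ < ξ then (ξ - τ) ^ β else 0) • u τ := by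
  ext τ
  by_cases hτ : τ ∈ Ioc a b
  · by_cases hτξ : τ < ξ
    · have : ξ - τ ∈ Ioc 0 L := ⟨by linarith, by linarith [hτ.1]⟩
      simp [truncRLKernel, hτ, hτξ, this]
    · have : ξ - τ ∉ Ioc 0 L := fun h => hτξ (by linarith [h.1])
      simp [truncRLKernel, hτ, hτξ, this]
  · simp [hτ]

variable {β : ℝ}

theorem integrableOn_Ioc_rpow_sub_smul (hβ : -1 / 2 < β) {c L τ : ℝ} (hτ : c ≤ τ) {v : ℝ → E}
    (hv : MemLp v 2 (volume.restrict (Ioc c L))) :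
    IntegrableOn (fun η => (η - τ) ^ β • v η) (Ioc τ L) := by
  have hk : MemLp (fun η => truncRLKernel (L - c) β (η - τ)) 2 volume :=
    (memLp_truncRLKernel (L - c) hβ).comp_measurePreserving (measurePreserving_sub_right volume τ)
  have hv' : MemLp ((Ioc c L).indicator v) 2 volume :=
    (memLp_indicator_iff_restrict measurableSet_Ioc).2 hv
  have := integrable_smul_of_memLp_two hk hv'
  rwa [truncRLKernel_comp_sub_right_smul_indicator hτ,
    integrable_indicator_iff measurableSet_Ioc] at this

theorem continuousOn_integral_Ioc_rpow_sub_smul (hβ : -1 / 2 < β) {c L : ℝ} {v : ℝ → E}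
    (hv : MemLp v 2 (volume.restrict (Ioc c L))) :
    ContinuousOn (fun τ => ∫ η in Ioc τ L, (η - τ) ^ β • v η) (Ici c) := by
  have hv' : MemLp ((Ioc c L).indicator v) 2 volume :=
    (memLp_indicator_iff_restrict measurableSet_Ioc).2 hv
  refine (continuous_integral_comp_sub_right_smul_of_memLp_two (memLp_truncRLKernel (L - c) hβ)
    hv').continuousOn.congr fun τ hτ => ?_
  simp only [truncRLKernel_comp_sub_right_smul_indicator (mem_Ici.1 hτ),
    integral_indicator measurableSet_Ioc]

theorem integrableOn_Ioc_ite_rpow_sub_smul (hβ : -1 / 2 < β) {a b : ℝ} {u : ℝ → E}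
    (hu : MemLp u 2 (volume.restrict (Ioc a b))) (ξ : ℝ) :
    IntegrableOn (fun τ => (if τ < ξ then (ξ - τ) ^ β else 0) • u τ) (Ioc a b) := by
  have hk : MemLp (fun τ => truncRLKernel (ξ - a) β (ξ - τ)) 2 volume :=
    (memLp_truncRLKernel (ξ - a) hβ).comp_measurePreserving
      (Measure.measurePreserving_sub_left volume ξ)
  have hu' : MemLp ((Ioc a b).indicator u) 2 volume :=
    (memLp_indicator_iff_restrict measurableSet_Ioc).2 hu
  have := integrable_smul_of_memLp_two hk hu'
  rwa [truncRLKernel_comp_sub_left_smul_indicator le_rfl,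
    integrable_indicator_iff measurableSet_Ioc] at this

theorem continuous_integral_Ioc_ite_rpow_sub_smul (hβ : -1 / 2 < β) {a b : ℝ} {u : ℝ → E}
    (hu : MemLp u 2 (volume.restrict (Ioc a b))) :
    Continuous fun ξ => ∫ τ in Ioc a b, (if τ < ξ then (ξ - τ) ^ β else 0) • u τ := by
  have hu' : MemLp ((Ioc a b).indicator u) 2 volume :=
    (memLp_indicator_iff_restrict measurableSet_Ioc).2 hu
  refine continuous_iff_continuousAt.2 fun ξ₀ => ContinuousOn.continuousAt ?_
    (Iic_mem_nhds (lt_add_one ξ₀))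
  refine (continuous_integral_comp_sub_smul_of_memLp_two (memLp_truncRLKernel (ξ₀ + 1 - a) hβ)
    hu').continuousOn.congr fun ξ hξ => ?_
  simp only [truncRLKernel_comp_sub_left_smul_indicator (sub_le_sub_right (mem_Iic.1 hξ) a),
    integral_indicator measurableSet_Ioc]

end RiemannLiouville

theorem statement14_general (d : ℕ) (T α : ℝ)
    (hα1 : 1 / 2 < α)
    (s t : ℝ) (htT : t ≤ T)
    (v : ℝ → EuclideanSpace ℝ (Fin d)) (hv : MemLp v 2 (fracMeas T)) :
    let f : ℝ → EuclideanSpace ℝ (Fin d) := fun ξ =>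
      (1 / Real.Gamma α ^ 2) •
        ∫ τ in Set.Ioc (T - t) (T - s),
          (if τ < ξ then (ξ - τ) ^ (α - 1) else 0) •
            ∫ η in Set.Ioc τ T, ((η - τ) ^ (α - 1)) • v η
    (∀ τ ∈ Set.Ioc (T - t) (T - s),
        IntegrableOn (fun η => ((η - τ) ^ (α - 1)) • v η) (Set.Ioc τ T)) ∧
    (∀ ξ ∈ Set.Ioo (0 : ℝ) T,
        IntegrableOn
          (fun τ => (if τ < ξ then (ξ - τ) ^ (α - 1) else 0) •
            ∫ η in Set.Ioc τ T, ((η - τ) ^ (α - 1)) • v η)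
          (Set.Ioc (T - t) (T - s))) ∧
    ContinuousOn f (Set.Ioo 0 T) ∧
    (∀ ξ ∈ Set.Ioc (0 : ℝ) (T - t), f ξ = 0) := by
  intro f
  have hβ : -1 / 2 < α - 1 := by linarith
  have hv₀ : MemLp v 2 (volume.restrict (Ioc 0 T)) := by
    rwa [← Measure.restrict_congr_set Ioo_ae_eq_Ioc]
  have hGcont : ContinuousOn (fun τ => ∫ η in Ioc τ T, (η - τ) ^ (α - 1) • v η)
      (Icc (T - t) (T - s)) :=
    (continuousOn_integral_Ioc_rpow_sub_smul hβ hv₀).mono fun τ hτ =>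
      mem_Ici.2 (by linarith [hτ.1])
  have hG := (hGcont.memLp_restrict_of_isCompact (μ := volume) isCompact_Icc measurableSet_Icc
    2).mono_measure (Measure.restrict_mono Ioc_subset_Icc_self le_rfl)
  refine ⟨fun τ hτ => integrableOn_Ioc_rpow_sub_smul hβ (by linarith [hτ.1]) hv₀,
    fun ξ _ => integrableOn_Ioc_ite_rpow_sub_smul hβ hG ξ,
    ((continuous_integral_Ioc_ite_rpow_sub_smul hβ hG).const_smul
      (1 / Real.Gamma α ^ 2)).continuousOn,
    fun ξ hξ => ?_⟩
  refine (congrArg _ (setIntegral_eq_zero_of_forall_eq_zero fun τ hτ => ?_)).trans (smul_zero _)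
  rw [if_neg (not_lt.2 (hξ.2.trans hτ.1.le)), zero_smul]

/-- For `0 ≤ s < t ≤ T` and `v ∈ L²((0,T);ℝ^d)`, the pointwise expression
`f(ξ) = (1/Γ(α)²) ∫_{T−t}^{T−s} 1_{τ<ξ} (ξ−τ)^(α−1) (∫_τ^T (η−τ)^(α−1) v(η) dη) dτ` of
`Q_T(t,s)v` is well defined (all the integrals are finite) for every `ξ ∈ (0,T)`, is continuous
on `(0,T)`, and vanishes on `(0, T−t]`. -/
theorem statement14 (d : ℕ) (hd : 1 ≤ d) (T α : ℝ) (hT : 0 < T)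
    (hα1 : 1 / 2 < α) (hα2 : α < 1)
    (s t : ℝ) (hs : 0 ≤ s) (hst : s < t) (htT : t ≤ T)
    (v : ℝ → EuclideanSpace ℝ (Fin d)) (hv : MemLp v 2 (fracMeas T)) :
    let f : ℝ → EuclideanSpace ℝ (Fin d) := fun ξ =>
      (1 / Real.Gamma α ^ 2) •
        ∫ τ in Set.Ioc (T - t) (T - s),
          (if τ < ξ then (ξ - τ) ^ (α - 1) else 0) •
            ∫ η in Set.Ioc τ T, ((η - τ) ^ (α - 1)) • v η
    (∀ τ ∈ Set.Ioc (T - t) (T - s),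
        IntegrableOn (fun η => ((η - τ) ^ (α - 1)) • v η) (Set.Ioc τ T)) ∧
    (∀ ξ ∈ Set.Ioo (0 : ℝ) T,
        IntegrableOn
          (fun τ => (if τ < ξ then (ξ - τ) ^ (α - 1) else 0) •
            ∫ η in Set.Ioc τ T, ((η - τ) ^ (α - 1)) • v η)
          (Set.Ioc (T - t) (T - s))) ∧
    ContinuousOn f (Set.Ioo 0 T) ∧
    (∀ ξ ∈ Set.Ioc (0 : ℝ) (T - t), f ξ = 0) :=
  statement14_general d T α hα1 s t htT v hv
end
end
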